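/- arXiv:2603.25856 — 5 statements merged into one kernel-verified Lean document; each statement's English description precedes it below -/
import Mathlib

section
/- For every integer n ≥ 2, real p > 1 and real a with 0 ≤ a < p-1, one has (n^p - (n-1)^p - n^a) · ∑_{k=n}^∞ 1/k^{p-a} ≥ n^a · ∑_{k=1}^{n-1} 1/k^{p-a}. -/
open Real

lemma keyG {x s : ℝ} (hx0 : 0 < x) (hx1 : x < 1) (hs : 0 < s) :
    (1 - x^2)^s * (1 + x) ≤ 1 + x * (1 - x)^s := by
  have hx2 : x^2 < 1 := by nlinarith
  have h1x : (0:ℝ) < 1 - x := by linarith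
  have h1x2 : (0:ℝ) < 1 - x^2 := by linarith
  have hfac : (1 - x^2) = (1-x)*(1+x) := by ring
  -- it suffices to show  x * ((1-x^2)^s - (1-x)^s) ≤ 1 - (1-x^2)^s
  have main : x * ((1 - x^2)^s - (1 - x)^s) ≤ 1 - (1 - x^2)^s := by
    rcases le_or_gt s 1 with hs1 | hs1
    · -- s ≤ 1 case
      -- (1-x^2)^s ≤ 1 - s*x^2
      have hb1 : (1 - x^2)^s ≤ 1 - s*x^2 := by
        have := rpow_one_add_le_one_add_mul_self (s := -(x^2)) (by nlinarith) hs.le hs1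
        calc (1-x^2)^s = (1 + -(x^2))^s := by ring_nf
          _ ≤ 1 + s * -(x^2) := this
          _ = 1 - s*x^2 := by ring
      -- (1+x)^s ≤ 1 + s*x
      have hb2 : (1 + x)^s ≤ 1 + s*x :=
        rpow_one_add_le_one_add_mul_self (by linarith) hs.le hs1
      have hsplit : (1 - x^2)^s = (1-x)^s * (1+x)^s := by
        rw [hfac, mul_rpow h1x.le (by linarith)]
      have hone : (1-x)^s ≤ 1 := rpow_le_one h1x.le (by linarith) hs.le
      have hpos : (0:ℝ) < (1-x)^s := rpow_pos_of_pos h1x s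
      have h2 : (1 - x^2)^s - (1-x)^s ≤ s * x := by
        rw [hsplit]
        have : (1-x)^s * (1+x)^s - (1-x)^s = (1-x)^s * ((1+x)^s - 1) := by ring
        rw [this]
        have h3 : (1+x)^s - 1 ≤ s * x := by linarith
        have h4 : (0:ℝ) ≤ (1+x)^s - 1 := by
          have := rpow_le_rpow (by norm_num) (by linarith : (1:ℝ) ≤ 1 + x) hs.le
          simpa using this
        nlinarith
      have h5 : (0:ℝ) ≤ (1-x^2)^s - (1-x)^s := by
        rw [hsplit]
        nlinarith [rpow_le_rpow (by norm_num : (0:ℝ) ≤ 1) (by linarith : (1:ℝ) ≤ 1+x) hs.le,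
          one_rpow s]
      nlinarith
    · -- s ≥ 1 case
      have hb1 : 1 + s*x^2 ≤ (1 + x^2)^s :=
        one_add_mul_self_le_rpow_one_add (by nlinarith) hs1.le
      have hK1 : (1 - x^2)^s * (1 + s*x^2) ≤ 1 := by
        calc (1 - x^2)^s * (1 + s*x^2) ≤ (1 - x^2)^s * (1 + x^2)^s := by
              have := rpow_pos_of_pos h1x2 s
              nlinarith
          _ = ((1-x^2)*(1+x^2))^s := (mul_rpow h1x2.le (by nlinarith)).symm
          _ = (1 - x^4)^s := by ring_nf
          _ ≤ 1 := rpow_le_one (by nlinarith) (by nlinarith) (by linarith)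
      -- (1-x^2)^s - (1-x)^s ≤ (1-x^2)^s * (s*x/(1+x))
      have h1px : (0:ℝ) < 1 + x := by linarith
      have ha : (1-x^2)^s - (1-x)^s ≤ (1-x^2)^s * (s*x/(1+x)) := by
        have hq : (1-x) = (1-x^2) * (1/(1+x)) := by field_simp; ring
        have hb : (1/(1+x) : ℝ) = 1 + (-(x/(1+x))) := by field_simp; ring
        have hber : 1 + s * (-(x/(1+x))) ≤ (1 + (-(x/(1+x))))^s := by
          apply one_add_mul_self_le_rpow_one_add _ hs1.le
          have : x/(1+x) ≤ 1 := by
            rw [div_le_one h1px]; linarith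
          linarith
        have hxs : (1-x)^s = (1-x^2)^s * (1/(1+x))^s := by
          rw [hq, mul_rpow h1x2.le (by positivity)]
        have hpos2 : (0:ℝ) < (1-x^2)^s := rpow_pos_of_pos h1x2 s
        rw [hxs, hb]
        have h7 : 1 - s*(x/(1+x)) ≤ (1 + (-(x/(1+x))))^s := by
          calc 1 - s*(x/(1+x)) = 1 + s * (-(x/(1+x))) := by ring
            _ ≤ _ := hber
        have e0 : s*x/(1+x) = s*(x/(1+x)) := by ring
        rw [e0]
        nlinarith [mul_le_mul_of_nonneg_left (show 1 - (1 + -(x/(1+x)))^s ≤ s*(x/(1+x)) by linarith) hpos2.le]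
      have hpos2 : (0:ℝ) < (1-x^2)^s := rpow_pos_of_pos h1x2 s
      have hden : (0:ℝ) < 1 + s*x^2 := by nlinarith
      -- x * RHS of ha  ≤ 1 - (1-x^2)^s
      have hfin : x * ((1-x^2)^s * (s*x/(1+x))) ≤ 1 - (1-x^2)^s := by
        have e1 : x * ((1-x^2)^s * (s*x/(1+x))) = (1-x^2)^s * (s*x^2) * (1/(1+x)) := by
          field_simp
        have e2 : (1-x^2)^s * (s*x^2) * (1/(1+x)) ≤ (1-x^2)^s * (s*x^2) := by
          have h01 : (1/(1+x) : ℝ) ≤ 1 := by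
            rw [div_le_one h1px]; linarith
          have : (0:ℝ) ≤ (1-x^2)^s * (s*x^2) := by positivity
          nlinarith
        -- (1-x^2)^s * (s*x^2) ≤ 1 - (1-x^2)^s  ⇔  (1-x^2)^s * (1 + s*x^2) ≤ 1
        have e3 : (1-x^2)^s * (s*x^2) ≤ 1 - (1-x^2)^s := by nlinarith
        linarith
      have hmono : x * ((1-x^2)^s - (1-x)^s) ≤ x * ((1-x^2)^s * (s*x/(1+x))) := by
        have := ha
        nlinarith
      linarith
  nlinarith [rpow_pos_of_pos h1x s]

lemma keyC {s q t : ℝ} (hs : 0 < s) (hq : 1 < q) (hqs : q ≤ s + 1) (ht : 2 ≤ t) :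
    t^(s-q)/(t^s - (t-1)^s) - (t+1)^(s-q)/((t+1)^s - t^s) ≤ t^(-q) := by
  have ht0 : (0:ℝ) < t := by linarith
  have ht1 : (0:ℝ) < t - 1 := by linarith
  have htp : (0:ℝ) < t + 1 := by linarith
  set X := (t-1)^s with hX
  set Z := t^s with hZ
  set Y := (t+1)^s with hY
  have hXpos : 0 < X := rpow_pos_of_pos ht1 s
  have hZpos : 0 < Z := rpow_pos_of_pos ht0 s
  have hYpos : 0 < Y := rpow_pos_of_pos htp s
  have hA : 0 < Z - X := sub_pos.mpr (rpow_lt_rpow ht1.le (by linarith) hs)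
  have hB : 0 < Y - Z := sub_pos.mpr (rpow_lt_rpow ht0.le (by linarith) hs)
  -- G_t : X*(Y*(t+1)) ≤ Z*Z*t + X*Z
  have Gt : X*(Y*(t+1)) ≤ Z*Z*t + X*Z := by
    have hx0 : (0:ℝ) < 1/t := by positivity
    have hx1 : 1/t < 1 := by rw [div_lt_one ht0]; linarith
    have h := keyG hx0 hx1 hs
    have e1 : (1 - (1/t)^2) = ((t-1)*(t+1))/(t*t) := by field_simp; ring
    have e2 : (1 - 1/t) = (t-1)/t := by field_simp
    rw [e1, e2, div_rpow (by positivity) (by positivity),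
      mul_rpow ht1.le htp.le, mul_rpow ht0.le ht0.le, div_rpow ht1.le ht0.le] at h
    calc X*(Y*(t+1)) = (X*Y/(Z*Z)*(1+1/t))*(Z*Z*t) := by field_simp
      _ ≤ (1 + (1/t)*(X/Z))*(Z*Z*t) := by
          apply mul_le_mul_of_nonneg_right h (by positivity)
      _ = Z*Z*t + X*Z := by field_simp
  -- reduce goal
  have etq : t^(s-q) = Z * t^(-q) := by
    rw [hZ, ← rpow_add ht0]; ring_nf
  have euq : (t+1)^(s-q) = Y * (t+1)^(-q) := by
    rw [hY, ← rpow_add htp]; ring_nf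
  have htq : 0 < t^(-q) := rpow_pos_of_pos ht0 _
  have huq : 0 < (t+1)^(-q) := rpow_pos_of_pos htp _
  rw [etq, euq, sub_le_iff_le_add, div_le_iff₀ hA]
  have key : t^(-q) * X * (Y - Z) ≤ Y * (t+1)^(-q) * (Z - X) := by
    set r := (t+1)/t with hr
    have hr1 : (1:ℝ) ≤ r := by rw [hr, le_div_iff₀ ht0]; linarith
    have hrq : r^q ≤ r^(s+1) := rpow_le_rpow_of_exponent_le hr1 hqs
    have hrqpos : 0 < r^q := rpow_pos_of_pos (by linarith) q
    have etq2 : t^(-q) = (t+1)^(-q) * r^q := by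
      rw [hr, div_rpow htp.le ht0.le, rpow_neg htp.le, rpow_neg ht0.le]
      field_simp
    have ers : r^(s+1) = Y*(t+1)/(Z*t) := by
      rw [hr, div_rpow htp.le ht0.le, rpow_add htp, rpow_add ht0, rpow_one, rpow_one]
    have step1 : t^(-q) * X * (Y - Z) ≤ (t+1)^(-q) * (X * (Y-Z) * r^(s+1)) := by
      rw [etq2]
      have : X * (Y - Z) * r^q ≤ X * (Y - Z) * r^(s+1) := by
        apply mul_le_mul_of_nonneg_left hrq (by positivity)
      nlinarith [this, huq]
    have step2 : X * (Y-Z) * r^(s+1) ≤ Y * (Z - X) := by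
      have h4 : X*(Y-Z)*(Y*(t+1)) ≤ Y*(Z-X)*(Z*t) := by
        nlinarith [mul_le_mul_of_nonneg_left Gt hYpos.le]
      have hZt : (0:ℝ) < Z*t := by positivity
      calc X * (Y-Z) * r^(s+1) = X*(Y-Z)*(Y*(t+1))/(Z*t) := by rw [ers]; ring
        _ ≤ Y*(Z-X)*(Z*t)/(Z*t) := by
            apply div_le_div_of_nonneg_right h4 hZt.le
        _ = Y*(Z-X) := by field_simp
    calc t^(-q) * X * (Y - Z) ≤ (t+1)^(-q) * (X * (Y-Z) * r^(s+1)) := step1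
      _ ≤ (t+1)^(-q) * (Y * (Z - X)) := by
          apply mul_le_mul_of_nonneg_left step2 huq.le
      _ = Y * (t+1)^(-q) * (Z - X) := by ring
  -- from key conclude
  have expand : (t^(-q) + Y * (t+1)^(-q)/(Y - Z)) * (Z - X)
      = t^(-q)*(Z-X) + Y*(t+1)^(-q)*(Z-X)/(Y-Z) := by ring
  rw [expand]
  have h2 : Z * t^(-q) - t^(-q)*(Z-X) = t^(-q)*X := by ring
  have h3 : t^(-q)*X ≤ Y*(t+1)^(-q)*(Z-X)/(Y-Z) := by
    rw [le_div_iff₀ hB]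
    calc t^(-q)*X*(Y-Z) = t^(-q)*X*(Y-Z) := rfl
      _ ≤ Y * (t+1)^(-q) * (Z - X) := key
  linarith
lemma myRpowSplit {x : ℝ} (hx : 0 < x) (y : ℝ) : x ^ y = x^(y-1) * x := by
  calc x^y = x^(y-1+1) := by congr 1; ring
    _ = x^(y-1) * x^(1:ℝ) := rpow_add hx _ _
    _ = x^(y-1) * x := by rw [rpow_one]

set_option maxHeartbeats 1600000 in
theorem stmt1 (n : ℕ) (hn : 2 ≤ n) (p a : ℝ) (hp : 1 < p) (ha0 : 0 ≤ a) (ha : a < p - 1) :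
    ((n : ℝ) ^ p - ((n : ℝ) - 1) ^ p - (n : ℝ) ^ a) * (∑' k : ℕ, 1 / ((k + n : ℕ) : ℝ) ^ (p - a))
      ≥ (n : ℝ) ^ a * ∑ k ∈ Finset.Icc 1 (n - 1), 1 / ((k : ℕ) : ℝ) ^ (p - a) := by
  have hq1 : 1 < p - a := by linarith
  have hs0 : 0 < p - 1 := by linarith
  set q : ℝ := p - a with hqdef
  set s : ℝ := p - 1 with hsdef
  have hqs : q ≤ s + 1 := by rw [hqdef, hsdef]; linarith
  set F : ℕ → ℝ := fun m => 1 / (m:ℝ) ^ q with hFdef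
  have hn0 : 0 < n := by omega
  have hnR : (2:ℝ) ≤ (n:ℝ) := by exact_mod_cast hn
  have hnpos : (0:ℝ) < (n:ℝ) := by linarith
  have hn1pos : (0:ℝ) < (n:ℝ) - 1 := by linarith
  have hFnonneg : ∀ m : ℕ, 0 ≤ F m := by
    intro m; rw [hFdef]; positivity
  have hFsum : Summable F := Real.summable_one_div_nat_rpow.mpr hq1
  have hFmono : ∀ a b : ℕ, 1 ≤ a → a ≤ b → F b ≤ F a := by
    intro a b ha1 hab
    have ha' : (0:ℝ) < (a:ℝ) := by exact_mod_cast ha1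
    apply one_div_le_one_div_of_le (rpow_pos_of_pos ha' q)
    exact rpow_le_rpow ha'.le (by exact_mod_cast hab) (by linarith)
  have hsum1 : Summable fun k => F (k+1) := (summable_nat_add_iff 1).mpr hFsum
  have hsumn : Summable fun k => F (k+n) := (summable_nat_add_iff n).mpr hFsum
  have hsumn1 : Summable fun k => F (k+(n+1)) := (summable_nat_add_iff (n+1)).mpr hFsum
  set Tn : ℝ := ∑' k : ℕ, F (k+n) with hTndef
  set T1 : ℝ := ∑' k : ℕ, F (k+1) with hT1def
  set S : ℝ := ∑ k ∈ Finset.Icc 1 (n-1), F k with hSdef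
  have hTnnonneg : 0 ≤ Tn := tsum_nonneg (fun k => hFnonneg _)
  -- splitting
  have hsplit : T1 = S + Tn := by
    have h0 := Summable.sum_add_tsum_nat_add (f := fun k => F (k+1)) (n-1) hsum1
    have e1 : (∑' i : ℕ, F (i+(n-1)+1)) = Tn := by
      rw [hTndef]; apply tsum_congr; intro k; congr 1; omega
    have e2 : (∑ i ∈ Finset.range (n-1), F (i+1)) = S := by
      rw [hSdef, ← Finset.Ico_add_one_right_eq_Icc, show n-1+1 = n by omega,
        Finset.sum_Ico_eq_sum_range]
      exact (Finset.sum_congr rfl (fun i _ => by rw [Nat.add_comm])).symm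
    rw [hT1def, ← h0, e2, e1]
  -- tail lower bound via telescoping
  have hTn : ((n:ℝ)^s - ((n:ℝ)-1)^s) * Tn ≥ (n:ℝ)^(s-q) := by
    set H : ℕ → ℝ := fun m => (m:ℝ)^(s-q) / ((m:ℝ)^s - ((m:ℝ)-1)^s) with hHdef
    have hden : ∀ m : ℕ, 2 ≤ m → 0 < (m:ℝ)^s - ((m:ℝ)-1)^s := by
      intro m hm
      have h2 : (2:ℝ) ≤ (m:ℝ) := by exact_mod_cast hm
      exact sub_pos.mpr (rpow_lt_rpow (by linarith) (by linarith) hs0)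
    have hHpos : ∀ m : ℕ, 2 ≤ m → 0 < H m := by
      intro m hm
      have h2 : (2:ℝ) ≤ (m:ℝ) := by exact_mod_cast hm
      exact div_pos (rpow_pos_of_pos (by linarith) _) (hden m hm)
    have hstep : ∀ m : ℕ, 2 ≤ m → H m - H (m+1) ≤ F m := by
      intro m hm
      have h2 : (2:ℝ) ≤ (m:ℝ) := by exact_mod_cast hm
      have hc := keyC hs0 hq1 hqs h2
      have e1 : F m = (m:ℝ)^(-q) := by
        rw [hFdef]
        simp only
        rw [rpow_neg (by linarith), one_div]
      have e2 : ((m+1:ℕ):ℝ) = (m:ℝ)+1 := by push_cast; ring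
      rw [hHdef, e1]
      simp only [e2]
      rw [show (m:ℝ)+1-1 = (m:ℝ) by ring]
      exact hc
    have hbound : ∀ m : ℕ, 2 ≤ m → H m ≤ (1 + 1/s) * (m:ℝ)^(1-q) := by
      intro m hm
      have h2 : (2:ℝ) ≤ (m:ℝ) := by exact_mod_cast hm
      have hm0 : (0:ℝ) < (m:ℝ) := by linarith
      have hm1 : (0:ℝ) < (m:ℝ)-1 := by linarith
      have hms1 : (0:ℝ) < (m:ℝ)^(s-1) := rpow_pos_of_pos hm0 _
      have hmin : (0:ℝ) < min s 1 := lt_min hs0 one_pos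
      have hlow : min s 1 * (m:ℝ)^(s-1) ≤ (m:ℝ)^s - ((m:ℝ)-1)^s := by
        rcases le_or_gt 1 s with h1 | h1
        · have e : ((m:ℝ)-1)^s = ((m:ℝ)-1)^(s-1) * ((m:ℝ)-1) := myRpowSplit hm1 s
          have e' : (m:ℝ)^s = (m:ℝ)^(s-1) * (m:ℝ) := myRpowSplit hm0 s
          have hle : ((m:ℝ)-1)^(s-1) ≤ (m:ℝ)^(s-1) :=
            rpow_le_rpow hm1.le (by linarith) (by linarith)
          have hminle : min s 1 ≤ 1 := min_le_right _ _
          have h0 : ((m:ℝ)-1)^(s-1) * ((m:ℝ)-1) ≤ (m:ℝ)^(s-1) * ((m:ℝ)-1) :=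
            mul_le_mul_of_nonneg_right hle hm1.le
          nlinarith
        · have hminle : min s 1 = s := min_eq_left h1.le
          have hber : (1 + -(1/(m:ℝ)))^s ≤ 1 + s * (-(1/(m:ℝ))) := by
            apply rpow_one_add_le_one_add_mul_self _ hs0.le h1.le
            have h9 : 1/(m:ℝ) ≤ 1 := by rw [div_le_one hm0]; linarith
            linarith
          have hinv : 1/(m:ℝ) ≤ 1 := by rw [div_le_one hm0]; linarith
          have e0 : ((m:ℝ)-1) = (m:ℝ) * (1 + -(1/(m:ℝ))) := by field_simp; ring
          have e1 : ((m:ℝ)-1)^s = (m:ℝ)^s * (1 + -(1/(m:ℝ)))^s := by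
            rw [e0, mul_rpow hm0.le (by linarith)]
          have e2 : (m:ℝ)^s = (m:ℝ)^(s-1) * (m:ℝ) := myRpowSplit hm0 s
          have hmspos : (0:ℝ) < (m:ℝ)^s := rpow_pos_of_pos hm0 _
          have h3 : ((m:ℝ)-1)^s ≤ (m:ℝ)^s * (1 - s/(m:ℝ)) := by
            rw [e1]
            apply mul_le_mul_of_nonneg_left _ hmspos.le
            calc (1 + -(1/(m:ℝ)))^s ≤ 1 + s * (-(1/(m:ℝ))) := hber
              _ = 1 - s/(m:ℝ) := by ring
          have h4 : (m:ℝ)^s * (s/(m:ℝ)) = s * (m:ℝ)^(s-1) := by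
            rw [e2]; field_simp
          rw [hminle]
          nlinarith
      have h5 : H m ≤ (m:ℝ)^(s-q) / (min s 1 * (m:ℝ)^(s-1)) := by
        rw [hHdef]
        simp only
        exact div_le_div_of_nonneg_left (rpow_pos_of_pos hm0 _).le
          (mul_pos hmin hms1) hlow
      have h6 : (m:ℝ)^(s-q) / (min s 1 * (m:ℝ)^(s-1)) = (1/min s 1) * (m:ℝ)^(1-q) := by
        have e7 : (m:ℝ)^(s-q)/(m:ℝ)^(s-1) = (m:ℝ)^(1-q) := by
          rw [← rpow_sub hm0]; congr 1; ring
        rw [div_mul_eq_div_div_swap, e7, div_eq_mul_inv, mul_comm, ← one_div]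
      have h7 : (1/min s 1) ≤ 1 + 1/s := by
        rcases le_or_gt s 1 with h1 | h1
        · rw [min_eq_left h1]
          have : (0:ℝ) < 1/s := by positivity
          linarith [le_refl (1/s)]
        · rw [min_eq_right h1.le]
          have : (0:ℝ) < 1/s := by positivity
          linarith
      calc H m ≤ (1/min s 1) * (m:ℝ)^(1-q) := by rw [← h6]; exact h5
        _ ≤ (1 + 1/s) * (m:ℝ)^(1-q) := by
            apply mul_le_mul_of_nonneg_right h7 (rpow_nonneg hm0.le _)
    have hH0 : Filter.Tendsto H Filter.atTop (nhds 0) := by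
      have hT1' : Filter.Tendsto (fun x : ℝ => x^(-(q-1))) Filter.atTop (nhds 0) :=
        tendsto_rpow_neg_atTop (by linarith)
      have hT2 : Filter.Tendsto (fun m : ℕ => (m:ℝ)^(1-q)) Filter.atTop (nhds 0) := by
        have := hT1'.comp tendsto_natCast_atTop_atTop (α := ℕ)
        apply this.congr
        intro m
        simp only [Function.comp_apply]
        congr 1
        ring
      have hT3 : Filter.Tendsto (fun m : ℕ => (1+1/s) * (m:ℝ)^(1-q)) Filter.atTop (nhds 0) := by
        have := hT2.const_mul (1+1/s)
        simpa using this
      apply squeeze_zero' _ _ hT3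
      · exact Filter.eventually_atTop.mpr ⟨2, fun m hm => (hHpos m hm).le⟩
      · exact Filter.eventually_atTop.mpr ⟨2, fun m hm => hbound m hm⟩
    have htel : ∀ M : ℕ, H n ≤ Tn + H (n+M) := by
      intro M
      have tele : ∑ k ∈ Finset.range M, (H (n+(k+1)) - H (n+k)) = H (n+M) - H (n+0) :=
        Finset.sum_range_sub (fun k => H (n+k)) M
      have hsum_le : ∑ k ∈ Finset.range M, (H (n+k) - H (n+(k+1))) ≤ ∑ k ∈ Finset.range M, F (n+k) := by
        apply Finset.sum_le_sum
        intro k _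
        have h2 : 2 ≤ n + k := by omega
        have := hstep (n+k) h2
        have e : n+(k+1) = (n+k)+1 := by omega
        rw [e]
        exact this
      have hpart : ∑ k ∈ Finset.range M, F (n+k) ≤ Tn := by
        rw [hTndef]
        calc ∑ k ∈ Finset.range M, F (n+k) = ∑ k ∈ Finset.range M, F (k+n) := by
              apply Finset.sum_congr rfl; intro k _; rw [Nat.add_comm]
          _ ≤ ∑' k : ℕ, F (k+n) := Summable.sum_le_tsum _ (fun i _ => hFnonneg _) hsumn
      have e0 : ∑ k ∈ Finset.range M, (H (n+k) - H (n+(k+1)))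
          = -(∑ k ∈ Finset.range M, (H (n+(k+1)) - H (n+k))) := by
        rw [← Finset.sum_neg_distrib]
        apply Finset.sum_congr rfl
        intro k _
        ring
      have : H (n+0) - H (n+M) ≤ Tn := by
        have := hsum_le
        rw [e0, tele] at this
        linarith
      simpa using this
    have hfin : H n ≤ Tn := by
      have hlim : Filter.Tendsto (fun M : ℕ => Tn + H (n+M)) Filter.atTop (nhds (Tn + 0)) := by
        apply Filter.Tendsto.const_add
        apply hH0.comp
        apply Filter.tendsto_atTop_atTop.mpr
        intro b
        exact ⟨b, fun a hab => by omega⟩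
      have := ge_of_tendsto hlim (Filter.Eventually.of_forall (fun M => htel M))
      simpa using this
    have hDn := hden n hn
    have heq : ((n:ℝ)^s - ((n:ℝ)-1)^s) * H n = (n:ℝ)^(s-q) := by
      rw [hHdef]
      simp only
      field_simp
    calc (n:ℝ)^(s-q) = ((n:ℝ)^s - ((n:ℝ)-1)^s) * H n := heq.symm
      _ ≤ ((n:ℝ)^s - ((n:ℝ)-1)^s) * Tn := mul_le_mul_of_nonneg_left hfin hDn.le
  -- block comparison
  have hmulF : ∀ m k : ℕ, F (m*k) = (1/(m:ℝ)^q) * F k := by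
    intro m k
    rw [hFdef]
    push_cast
    rw [mul_rpow (by positivity) (by positivity)]
    simp [one_div, mul_inv, mul_comm]
  have hsum2 : Summable fun k => F (n*(k+2)) := by
    apply Summable.congr (f := fun k => (1/(n:ℝ)^q) * F (k+2))
      (((summable_nat_add_iff 2).mpr hFsum).mul_left _)
    intro k; rw [hmulF]
  have hblock : (n:ℝ) * (∑' k : ℕ, F (n*(k+2))) ≤ ∑' k : ℕ, F (k+(n+1)) := by
    have hprodnn : ∀ ki : ℕ × Fin n, 0 ≤ F (n*(ki.1+2)) := fun ki => hFnonneg _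
    have hslice : ∀ x : ℕ, Summable fun _ : Fin n => F (n*(x+2)) := fun x =>
      Summable.of_finite
    have hprodsum : Summable (fun ki : ℕ × Fin n => F (n*(ki.1+2))) := by
      rw [summable_prod_of_nonneg hprodnn]
      refine ⟨hslice, ?_⟩
      apply Summable.congr (f := fun x => (n:ℝ) * F (n*(x+2))) (hsum2.mul_left _)
      intro k
      rw [tsum_fintype]
      simp [Finset.sum_const, nsmul_eq_mul]
    have hLHS : (∑' ki : ℕ × Fin n, F (n*(ki.1+2))) = (n:ℝ) * (∑' k : ℕ, F (n*(k+2))) := by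
      rw [Summable.tsum_prod' hprodsum hslice]
      calc ∑' (b : ℕ) (_ : Fin n), F (n*(b+2)) = ∑' (b : ℕ), (n:ℝ) * F (n*(b+2)) := by
            apply tsum_congr; intro b; rw [tsum_fintype]; simp [Finset.sum_const, nsmul_eq_mul]
        _ = (n:ℝ) * ∑' (b : ℕ), F (n*(b+2)) := tsum_mul_left
    rw [← hLHS]
    have hdiv : ∀ (k : ℕ) (i : Fin n), (n*k + i.1)/n = k := by
      intro k i
      rw [Nat.mul_add_div hn0, Nat.div_eq_of_lt i.2, Nat.add_zero]
    apply Summable.tsum_le_tsum_of_inj (fun ki : ℕ × Fin n => n*ki.1 + ki.2)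
    · rintro ⟨k, i⟩ ⟨k', i'⟩ h
      simp only at h
      have hk : k = k' := by rw [← hdiv k i, ← hdiv k' i', h]
      subst hk
      have hi : i.1 = i'.1 := by
        have := Nat.add_left_cancel h
        exact this
      have : i = i' := Fin.ext hi
      rw [this]
    · intro c _; exact hFnonneg _
    · rintro ⟨k, i⟩
      simp only
      apply hFmono _ _ (by omega)
      have e : n*(k+2) = n*k + n + n := by ring
      have hi : (i:ℕ) < n := i.2
      omega
    · exact hprodsum
    · exact hsumn1
  -- main key inequality
  have key : ((n:ℝ)^p - ((n:ℝ)-1)^p) * Tn ≥ (n:ℝ)^a * T1 := by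
    have hsum_n1 : Summable (fun k => F (n*(k+1))) := by
      apply Summable.congr (f := fun k => (1/(n:ℝ)^q) * F (k+1)) (hsum1.mul_left _)
      intro k; rw [hmulF]
    have hq0 : (0:ℝ) < (n:ℝ)^q := rpow_pos_of_pos hnpos q
    have hG1 : (∑' k : ℕ, F (n*(k+1))) = (1/(n:ℝ)^q) * T1 := by
      rw [hT1def, ← tsum_mul_left]
      exact tsum_congr (fun k => hmulF n (k+1))
    have hG2 : (∑' k : ℕ, F (n*(k+2))) = (∑' k : ℕ, F (n*(k+1))) - F n := by
      have h1 := Summable.tsum_eq_zero_add hsum_n1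
      have e0 : F (n*(0+1)) = F n := by congr 1; omega
      have e1 : (∑' k : ℕ, F (n*(k+1+1))) = ∑' k : ℕ, F (n*(k+2)) := by
        apply tsum_congr; intro k; congr 1
      rw [e0] at h1
      have : (∑' (b : ℕ), F (n * (b + 1 + 1))) = ∑' k : ℕ, F (n*(k+2)) := e1
      linarith [h1, this.symm.le, this.le]
    have hTail : (∑' k : ℕ, F (k+(n+1))) = Tn - F n := by
      have h1 := Summable.tsum_eq_zero_add hsumn
      simp only [Nat.zero_add] at h1
      have e1 : (∑' k : ℕ, F (k+1+n)) = ∑' k : ℕ, F (k+(n+1)) := by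
        apply tsum_congr; intro k; congr 1; omega
      rw [hTndef]
      linarith [h1, e1.le, e1.symm.le]
    have hFn : F n = 1/(n:ℝ)^q := rfl
    have hpq : (n:ℝ)^a * (n:ℝ)^q = (n:ℝ)^p := by
      rw [← rpow_add hnpos]; congr 1; rw [hqdef]; ring
    have hppos : (0:ℝ) < (n:ℝ)^p := rpow_pos_of_pos hnpos p
    have e_pa : (n:ℝ)^p * F n = (n:ℝ)^a := by
      rw [hFn, one_div, ← rpow_neg hnpos.le, ← rpow_add hnpos]
      congr 1; rw [hqdef]; ring
    have e_p1 : (n:ℝ)^p / (n:ℝ) = (n:ℝ)^(p-1) := by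
      rw [myRpowSplit hnpos p]
      field_simp
    have step : (n:ℝ)^a * T1 ≤ (n:ℝ)^a + (n:ℝ)^(p-1) * (Tn - F n) := by
      have hb' : (∑' k : ℕ, F (n*(k+2))) ≤ (Tn - F n)/(n:ℝ) := by
        rw [le_div_iff₀ hnpos]
        calc (∑' k : ℕ, F (n*(k+2))) * (n:ℝ) = (n:ℝ) * (∑' k : ℕ, F (n*(k+2))) := by ring
          _ ≤ ∑' k : ℕ, F (k+(n+1)) := hblock
          _ = Tn - F n := hTail
      calc (n:ℝ)^a * T1 = (n:ℝ)^a * ((n:ℝ)^q * (∑' k : ℕ, F (n*(k+1)))) := by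
            rw [hG1]; field_simp
        _ = (n:ℝ)^p * (∑' k : ℕ, F (n*(k+1))) := by rw [← mul_assoc, hpq]
        _ = (n:ℝ)^p * F n + (n:ℝ)^p * (∑' k : ℕ, F (n*(k+2))) := by rw [hG2]; ring
        _ ≤ (n:ℝ)^p * F n + (n:ℝ)^p * ((Tn - F n)/(n:ℝ)) := by nlinarith [hb']
        _ = (n:ℝ)^a + (n:ℝ)^(p-1) * (Tn - F n) := by
            rw [e_pa, mul_div_assoc']
            rw [show (n:ℝ)^p * (Tn - F n) / (n:ℝ) = ((n:ℝ)^p/(n:ℝ)) * (Tn - F n) by ring,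
              e_p1]
    have e3 : (n:ℝ)^(p-1) * F n = (n:ℝ)^(a-1) := by
      rw [hFn, one_div, ← rpow_neg hnpos.le, ← rpow_add hnpos]
      congr 1; rw [hqdef]; ring
    have e4 : (n:ℝ)^p = (n:ℝ)^(p-1) * (n:ℝ) := myRpowSplit hnpos p
    have e5 : ((n:ℝ)-1)^p = ((n:ℝ)-1)^(p-1) * ((n:ℝ)-1) := myRpowSplit hn1pos p
    have e6 : (n:ℝ)^a = (n:ℝ)^(a-1) * (n:ℝ) := myRpowSplit hnpos a
    have hTn' : ((n:ℝ)^(p-1) - ((n:ℝ)-1)^(p-1)) * Tn ≥ (n:ℝ)^(a-1) := by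
      rw [show p - 1 = s by rw [hsdef], show a - 1 = s - q by rw [hsdef, hqdef]; ring]
      exact hTn
    have hd : ((n:ℝ)^p - ((n:ℝ)-1)^p) * Tn
        = ((n:ℝ)-1) * (((n:ℝ)^(p-1) - ((n:ℝ)-1)^(p-1)) * Tn) + (n:ℝ)^(p-1) * Tn := by
      rw [e4, e5]; ring
    have h8 : ((n:ℝ)-1) * (((n:ℝ)^(p-1) - ((n:ℝ)-1)^(p-1)) * Tn) ≥ ((n:ℝ)-1) * (n:ℝ)^(a-1) :=
      mul_le_mul_of_nonneg_left hTn' (by linarith)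
    have h9 : ((n:ℝ)-1) * (n:ℝ)^(a-1) = (n:ℝ)^a - (n:ℝ)^(a-1) := by rw [e6]; ring
    have h10 : (n:ℝ)^(p-1) * (Tn - F n) = (n:ℝ)^(p-1) * Tn - (n:ℝ)^(a-1) := by
      rw [mul_sub, e3]
    rw [hd]
    linarith [step, h8, h9, h10]
  have hna : (0:ℝ) < (n:ℝ)^a := rpow_pos_of_pos hnpos a
  have hgoal : ((n:ℝ)^p - ((n:ℝ)-1)^p - (n:ℝ)^a) * Tn ≥ (n:ℝ)^a * S := by
    have hS : S = T1 - Tn := by linarith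
    rw [hS]
    nlinarith [key]
  exact hgoal
end

section
/- Let p > 1, 0 ≤ a < p-1, n ≥ 2, and let x_1 ≥ x_2 ≥ … ≥ x_n ≥ 0 be real numbers. Then (x_1 + x_2 + … + x_n)^p - (1^a·x_1^p + 2^a·x_2^p + … + n^a·x_n^p) ≥ ∑_{k=2}^n (k^p - (k-1)^p - k^a)·x_k^p. -/
lemma aux_key (p : ℝ) (hp : 1 ≤ p) (A B c : ℝ) (hB : 0 ≤ B) (hBA : B ≤ A) (hc : 0 ≤ c) :
    (B + c) ^ p - B ^ p ≤ (A + c) ^ p - A ^ p := by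
  set D := A - B + c with hD
  rcases eq_or_lt_of_le (by linarith : (0:ℝ) ≤ D) with hD0 | hD0
  · have h1 : A = B := by nlinarith
    have h2 : c = 0 := by nlinarith
    simp [h1, h2]
  · have hDne : D ≠ 0 := ne_of_gt hD0
    set t := (A - B) / D with ht
    have ht0 : 0 ≤ t := div_nonneg (by linarith) hD0.le
    have htD : t * D = A - B := by rw [ht, div_mul_cancel₀ _ hDne]
    have ht1 : 1 - t = c / D := by field_simp [ht]; linear_combination -htD + hD
    have ht1' : 0 ≤ 1 - t := by rw [ht1]; exact div_nonneg hc hD0.le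
    have hcv := convexOn_rpow hp
    have hBmem : B ∈ Set.Ici (0:ℝ) := Set.mem_Ici.2 hB
    have hAcmem : A + c ∈ Set.Ici (0:ℝ) := Set.mem_Ici.2 (by linarith)
    have h1 := hcv.2 hBmem hAcmem ht0 ht1' (by ring)
    have h2 := hcv.2 hBmem hAcmem ht1' ht0 (by ring)
    simp only [smul_eq_mul] at h1 h2
    have e1 : t * B + (1 - t) * (A + c) = B + c := by
      rw [ht1]; field_simp [ht]; linear_combination B * htD - (B + c) * hD
    have e2 : (1 - t) * B + t * (A + c) = A := by
      rw [ht1]; field_simp [ht]; linear_combination (c + A) * htD - A * hD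
    rw [e1] at h1
    rw [e2] at h2
    linarith

theorem stmt2 (p a : ℝ) (hp : 1 < p) (ha0 : 0 ≤ a) (ha : a < p - 1)
    (n : ℕ) (hn : 2 ≤ n) (x : ℕ → ℝ)
    (hmono : ∀ i j, 1 ≤ i → i ≤ j → j ≤ n → x j ≤ x i)
    (hpos : 0 ≤ x n) :
    (∑ k ∈ Finset.Icc 1 n, x k) ^ p - ∑ k ∈ Finset.Icc 1 n, (k : ℝ) ^ a * (x k) ^ p
      ≥ ∑ k ∈ Finset.Icc 2 n, ((k : ℝ) ^ p - ((k : ℝ) - 1) ^ p - (k : ℝ) ^ a) * (x k) ^ p := by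
  have hp0 : p ≠ 0 := by linarith
  have hxnn : ∀ k, 1 ≤ k → k ≤ n → 0 ≤ x k := fun k h1 h2 =>
    le_trans hpos (hmono k n h1 h2 le_rfl)
  -- main induction
  have key : ∀ m, m ≤ n →
      ∑ k ∈ Finset.Icc 1 m, ((k:ℝ)^p - ((k:ℝ)-1)^p) * x k ^ p
        ≤ (∑ k ∈ Finset.Icc 1 m, x k) ^ p := by
    intro m
    induction m with
    | zero => intro _; simp [Real.zero_rpow hp0]
    | succ m ih =>
      intro hm
      have hm' : m ≤ n := by omega
      have hih := ih hm'
      rw [Finset.sum_Icc_succ_top (by omega : 1 ≤ m + 1),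
          Finset.sum_Icc_succ_top (by omega : 1 ≤ m + 1)]
      set S := ∑ k ∈ Finset.Icc 1 m, x k with hS
      have hx1 : 0 ≤ x (m + 1) := hxnn (m+1) (by omega) hm
      have hSm : (m:ℝ) * x (m + 1) ≤ S := by
        have : ∑ k ∈ Finset.Icc 1 m, x (m+1) ≤ S :=
          Finset.sum_le_sum fun k hk => by
            have hk' := Finset.mem_Icc.mp hk
            exact hmono k (m+1) hk'.1 (by omega) hm
        simpa [Nat.card_Icc, mul_comm] using this
      have hB0 : 0 ≤ (m:ℝ) * x (m + 1) := by positivity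
      have hkey := aux_key p hp.le S ((m:ℝ) * x (m + 1)) (x (m+1)) hB0 hSm hx1
      have e1 : (m:ℝ) * x (m+1) + x (m+1) = ((m:ℝ)+1) * x (m+1) := by ring
      rw [e1, Real.mul_rpow (by positivity) hx1, Real.mul_rpow (by positivity) hx1] at hkey
      have e2 : ((m+1:ℕ):ℝ) = (m:ℝ) + 1 := by push_cast; ring
      have hS0 : 0 ≤ S := Finset.sum_nonneg fun k hk => by
        have hk' := Finset.mem_Icc.mp hk
        exact hxnn k hk'.1 (by omega)
      rw [e2]
      have : (((m:ℝ)+1)^p - ((m:ℝ)+1-1)^p) * x (m+1) ^ p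
          = ((m:ℝ)+1)^p * x (m+1)^p - (m:ℝ)^p * x (m+1)^p := by ring_nf
      rw [this]
      linarith
  have hkeyn := key n le_rfl
  rw [ge_iff_le, le_sub_iff_add_le]
  have hsplit : Finset.Icc 1 n = insert 1 (Finset.Icc 2 n) := by
    ext k; simp [Finset.mem_Icc]; omega
  have hnotmem : (1:ℕ) ∉ Finset.Icc 2 n := by simp
  rw [hsplit, Finset.sum_insert hnotmem, Finset.sum_insert hnotmem] at hkeyn ⊢
  simp only [Nat.cast_one, Real.one_rpow, one_mul] at hkeyn ⊢
  rw [show (1:ℝ) - 1 = 0 from by ring, Real.zero_rpow hp0] at hkeyn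
  have hsum : ∑ k ∈ Finset.Icc 2 n, ((k:ℝ)^p - ((k:ℝ)-1)^p - (k:ℝ)^a) * x k ^ p
      + ∑ k ∈ Finset.Icc 2 n, (k:ℝ)^a * x k ^ p
      = ∑ k ∈ Finset.Icc 2 n, ((k:ℝ)^p - ((k:ℝ)-1)^p) * x k ^ p := by
    rw [← Finset.sum_add_distrib]
    apply Finset.sum_congr rfl; intro k _; ring
  linarith
end

section
/- Let p > 1 and 0 ≤ a < p-1. For every nonnegative nonincreasing sequence (x_n)_{n≥1} with ∑_{n=1}^∞ x_n^p · n^a < ∞, one has ∑_{n=1}^∞ n^a · ((x_1 + … + x_n)/n)^p ≥ ζ(p-a) · ∑_{n=1}^∞ n^a · x_n^p, where ζ is the Riemann zeta function. -/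
open Finset Real Filter

-- Bernoulli-type pointwise bound, exponent in (0,1)
lemma bern_head {c : ℝ} (hc0 : 0 < c) (hc1 : c < 1) {k : ℕ} (hk : 1 ≤ k) :
    (k:ℝ)^(-c) ≤ (1-c)⁻¹ * ((k:ℝ)^(1-c) - ((k-1:ℕ):ℝ)^(1-c)) := by
  have hK1 : (1:ℝ) ≤ (k:ℝ) := by exact_mod_cast hk
  have hK0 : (0:ℝ) < (k:ℝ) := by linarith
  have hcast : ((k-1:ℕ):ℝ) = (k:ℝ) - 1 := by
    have := Nat.cast_sub hk (R := ℝ); simpa using this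
  -- no-op
  have hber : ((k:ℝ) - 1)^(1-c) ≤ (k:ℝ)^(1-c) - (1-c) * (k:ℝ)^(-c) := by
    have h1 : (k:ℝ) - 1 = (k:ℝ) * (1 + (-1/(k:ℝ))) := by
      field_simp
      ring
    have hs : (-1:ℝ) ≤ -1/(k:ℝ) := by
      rw [neg_div]
      have : 1/(k:ℝ) ≤ 1 := by
        rw [div_le_one hK0]; exact hK1
      linarith
    have h2 : (1 + (-1/(k:ℝ)))^(1-c) ≤ 1 + (1-c) * (-1/(k:ℝ)) :=
      rpow_one_add_le_one_add_mul_self hs (by linarith) (by linarith)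
    calc ((k:ℝ) - 1)^(1-c) = (k:ℝ)^(1-c) * (1 + (-1/(k:ℝ)))^(1-c) := by
          rw [h1, Real.mul_rpow hK0.le (by nlinarith [div_le_one_of_le₀ hK1 hK0.le])]
      _ ≤ (k:ℝ)^(1-c) * (1 + (1-c) * (-1/(k:ℝ))) := by
          apply mul_le_mul_of_nonneg_left h2 (rpow_nonneg hK0.le _)
      _ = (k:ℝ)^(1-c) - (1-c) * ((k:ℝ)^(1-c) * (k:ℝ)⁻¹) := by ring
      _ = (k:ℝ)^(1-c) - (1-c) * (k:ℝ)^(-c) := by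
          rw [← Real.rpow_neg_one (k:ℝ), ← Real.rpow_add hK0]
          congr 1
          ring
  rw [hcast]
  rw [← sub_nonneg] at hber
  have h1c : (0:ℝ) < 1 - c := by linarith
  have : (1-c)⁻¹ * ((1-c) * (k:ℝ)^(-c)) ≤ (1-c)⁻¹ * ((k:ℝ)^(1-c) - ((k:ℝ)-1)^(1-c)) := by
    apply mul_le_mul_of_nonneg_left (by linarith) (by positivity)
  rw [← mul_assoc, inv_mul_cancel₀ h1c.ne', one_mul] at this
  linarith

-- head sum bound
lemma head_sum {c : ℝ} (hc0 : 0 < c) (hc1 : c < 1) (n : ℕ) :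
    ∑ k ∈ Icc 1 n, (k:ℝ)^(-c) ≤ (1-c)⁻¹ * (n:ℝ)^(1-c) := by
  have h1c : (0:ℝ) < 1 - c := by linarith
  have : ∑ k ∈ Icc 1 n, (k:ℝ)^(-c)
      ≤ ∑ k ∈ Icc 1 n, (1-c)⁻¹ * (((k:ℕ):ℝ)^(1-c) - ((k-1:ℕ):ℝ)^(1-c)) := by
    apply Finset.sum_le_sum
    intro k hk
    exact bern_head hc0 hc1 (mem_Icc.1 hk).1
  refine this.trans ?_
  rw [← Finset.mul_sum]
  apply mul_le_mul_of_nonneg_left _ (by positivity)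
  have hreind : Icc 1 n = Ico 1 (n+1) := by rw [Finset.Ico_add_one_right_eq_Icc]
  rw [hreind, Finset.sum_Ico_eq_sum_range]
  simp only [Nat.add_sub_cancel]
  have : ∀ i ∈ Finset.range n, ((1+i:ℕ):ℝ)^(1-c) - ((1+i-1:ℕ):ℝ)^(1-c)
      = (fun j => ((j:ℕ):ℝ)^(1-c)) (i+1) - (fun j => ((j:ℕ):ℝ)^(1-c)) i := by
    intro i _; simp [Nat.add_comm 1 i]
  rw [Finset.sum_congr rfl this, Finset.sum_range_sub (fun j => ((j:ℕ):ℝ)^(1-c)) n]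
  simp [Real.zero_rpow h1c.ne']

lemma bern_tail {c : ℝ} (hc : 1 < c) {i : ℕ} (hi : 2 ≤ i) :
    (i:ℝ)^(-c) ≤ (c-1)⁻¹ * (((i-1:ℕ):ℝ)^(1-c) - (i:ℝ)^(1-c)) := by
  have hI2 : (2:ℝ) ≤ (i:ℝ) := by exact_mod_cast hi
  have hI0 : (0:ℝ) < (i:ℝ) := by linarith
  have hcast : ((i-1:ℕ):ℝ) = (i:ℝ) - 1 := by
    have := Nat.cast_sub (show 1 ≤ i by omega) (R := ℝ); simpa using this
  set γ : ℝ := c - 1 with hγ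
  have hγ0 : 0 < γ := by rw [hγ]; linarith
  set u : ℝ := 1/(i:ℝ) with hu
  have hu0 : 0 < u := by positivity
  have hu1 : u ≤ 1/2 := by
    rw [hu, div_le_div_iff₀ hI0 (by norm_num)]; linarith
  have hiu : (i:ℝ) - 1 = (i:ℝ) * (1 - u) := by
    rw [hu]; field_simp
  have h1u : (0:ℝ) < 1 - u := by linarith
  have hinv : (1-u)⁻¹ = 1 + u/(1-u) := by field_simp; ring
  have hrw : (1-u)^(-γ) = ((1-u)^γ)⁻¹ := Real.rpow_neg h1u.le γ
  have key : 1 + γ * u ≤ (1-u)^(-γ) := by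
    rcases le_or_gt 1 γ with hγ1 | hγ1
    · have hvnn : (0:ℝ) ≤ u/(1-u) := by positivity
      have hber : 1 + γ * (u/(1-u)) ≤ (1 + u/(1-u))^γ :=
        one_add_mul_self_le_rpow_one_add (by linarith) hγ1
      have huv : u ≤ u/(1-u) := by
        rw [le_div_iff₀ h1u]; nlinarith
      have heq : (1 + u/(1-u))^γ = (1-u)^(-γ) := by
        rw [← hinv, Real.inv_rpow h1u.le, ← hrw]
      calc 1 + γ * u ≤ 1 + γ * (u/(1-u)) := by nlinarith
        _ ≤ (1 + u/(1-u))^γ := hber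
        _ = (1-u)^(-γ) := heq
    · have hber : (1-u)^γ ≤ 1 - γ*u := by
        have := rpow_one_add_le_one_add_mul_self (s := -u) (by linarith) hγ0.le hγ1.le
        simpa [sub_eq_add_neg, mul_neg] using this
      have hγu : 0 < 1 - γ*u := by nlinarith
      have h1 : 1 + γ*u ≤ (1-γ*u)⁻¹ := by
        rw [inv_eq_one_div, le_div_iff₀ hγu]; nlinarith [sq_nonneg (γ*u)]
      have h2 : (1-γ*u)⁻¹ ≤ ((1-u)^γ)⁻¹ :=
        inv_anti₀ (rpow_pos_of_pos h1u γ) hber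
      rw [hrw]; linarith
  have hmain : γ * (i:ℝ)^(-c) ≤ ((i:ℝ)-1)^(1-c) - (i:ℝ)^(1-c) := by
    have h1 : ((i:ℝ)-1)^(1-c) = (i:ℝ)^(1-c) * (1-u)^(1-c) := by
      rw [hiu, Real.mul_rpow hI0.le h1u.le]
    have h2 : (1-u)^(1-c) = (1-u)^(-γ) := by congr 1; rw [hγ]; ring
    have h3 : (i:ℝ)^(1-c) * (1 + γ*u) = (i:ℝ)^(1-c) + γ * (i:ℝ)^(-c) := by
      have h5 : (i:ℝ)^(1-c) * u = (i:ℝ)^(-c) := by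
        rw [hu, one_div, ← Real.rpow_neg_one (i:ℝ), ← Real.rpow_add hI0]
        congr 1; ring
      calc (i:ℝ)^(1-c) * (1 + γ*u) = (i:ℝ)^(1-c) + γ * ((i:ℝ)^(1-c) * u) := by ring
        _ = (i:ℝ)^(1-c) + γ * (i:ℝ)^(-c) := by rw [h5]
    have h4 : (i:ℝ)^(1-c) + γ * (i:ℝ)^(-c) ≤ ((i:ℝ)-1)^(1-c) := by
      rw [h1, h2, ← h3]
      exact mul_le_mul_of_nonneg_left key (rpow_nonneg hI0.le _)
    linarith
  rw [hcast]
  calc (i:ℝ)^(-c) = γ⁻¹ * (γ * (i:ℝ)^(-c)) := by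
        rw [← mul_assoc, inv_mul_cancel₀ hγ0.ne', one_mul]
    _ ≤ γ⁻¹ * (((i:ℝ)-1)^(1-c) - (i:ℝ)^(1-c)) :=
        mul_le_mul_of_nonneg_left hmain (by positivity)

lemma tail_sum {c : ℝ} (hc : 1 < c) {k : ℕ} (hk : 1 ≤ k) (N : ℕ) :
    ∑ i ∈ Icc k N, (i:ℝ)^(-c) ≤ (1 + (c-1)⁻¹) * (k:ℝ)^(1-c) := by
  have hK0 : (0:ℝ) < (k:ℝ) := by exact_mod_cast hk
  have hinvnn : (0:ℝ) ≤ (c-1)⁻¹ := by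
    rw [inv_nonneg]; linarith
  have hC : (0:ℝ) ≤ (1 + (c-1)⁻¹) * (k:ℝ)^(1-c) :=
    mul_nonneg (by linarith) (rpow_nonneg hK0.le _)
  rcases lt_or_ge N k with hNk | hNk
  · rw [Finset.Icc_eq_empty (by omega)]; simpa using hC
  -- split off first term
  have hsplit : Icc k N = insert k (Icc (k+1) N) := by
    ext m; simp [Finset.mem_Icc, Finset.mem_insert]; omega
  rw [hsplit, Finset.sum_insert (by simp [Finset.mem_Icc])]
  have hfirst : (k:ℝ)^(-c) ≤ (k:ℝ)^(1-c) := by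
    apply Real.rpow_le_rpow_of_exponent_le (by exact_mod_cast hk) (by linarith)
  have hsecond : ∑ i ∈ Icc (k+1) N, (i:ℝ)^(-c) ≤ (c-1)⁻¹ * (k:ℝ)^(1-c) := by
    have hpt : ∑ i ∈ Icc (k+1) N, (i:ℝ)^(-c)
        ≤ ∑ i ∈ Icc (k+1) N, (c-1)⁻¹ * (((i-1:ℕ):ℝ)^(1-c) - ((i:ℕ):ℝ)^(1-c)) := by
      apply Finset.sum_le_sum
      intro i hi
      have : 2 ≤ i := by have := (Finset.mem_Icc.1 hi).1; omega
      exact bern_tail hc this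
    refine hpt.trans ?_
    rw [← Finset.mul_sum]
    apply mul_le_mul_of_nonneg_left _ hinvnn
    rw [show Icc (k+1) N = Ico (k+1) (N+1) by rw [Finset.Ico_add_one_right_eq_Icc],
      Finset.sum_Ico_eq_sum_range]
    have hcg : ∀ j ∈ Finset.range (N+1-(k+1)),
        ((k+1+j-1:ℕ):ℝ)^(1-c) - ((k+1+j:ℕ):ℝ)^(1-c)
        = (fun t => ((k+t:ℕ):ℝ)^(1-c)) j - (fun t => ((k+t:ℕ):ℝ)^(1-c)) (j+1) := by
      intro j _
      have e1 : k+1+j-1 = k+j := by omega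
      have e2 : k+1+j = k+(j+1) := by omega
      simp [e1, e2]
    rw [Finset.sum_congr rfl hcg, Finset.sum_range_sub' (fun t => ((k+t:ℕ):ℝ)^(1-c))]
    simp only [Nat.add_zero]
    have : (0:ℝ) ≤ ((k+(N+1-(k+1)):ℕ):ℝ)^(1-c) := rpow_nonneg (by positivity) _
    linarith
  linarith

-- monotonicity of t ↦ (t+δ)^p - t^p on [0, ∞)
lemma rpow_diff_mono {p : ℝ} (hp : 1 ≤ p) {δ : ℝ} (hδ : 0 ≤ δ) {A B : ℝ}
    (hA : 0 ≤ A) (hAB : A ≤ B) : (A+δ)^p - A^p ≤ (B+δ)^p - B^p := by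
  have hmono : MonotoneOn (fun t : ℝ => (t+δ)^p - t^p) (Set.Ici 0) := by
    have hc1 : Continuous (fun t : ℝ => t^p) := by
      rw [continuous_iff_continuousAt]
      intro t
      exact Real.continuousAt_rpow_const t p (Or.inr (by linarith))
    have hcont : ContinuousOn (fun t : ℝ => (t+δ)^p - t^p) (Set.Ici 0) :=
      ((hc1.comp (continuous_id.add continuous_const)).sub hc1).continuousOn
    have hderiv : ∀ t : ℝ, HasDerivAt (fun t : ℝ => (t+δ)^p - t^p)
        (p * (t+δ)^(p-1) - p * t^(p-1)) t := by
      intro t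
      have h1 : HasDerivAt (fun t : ℝ => (t+δ)^p) (p * (t+δ)^(p-1) * 1) t := by
        exact (Real.hasDerivAt_rpow_const (Or.inr hp)).comp t
          ((hasDerivAt_id t).add_const δ)
      have h2 : HasDerivAt (fun t : ℝ => t^p) (p * t^(p-1)) t :=
        Real.hasDerivAt_rpow_const (Or.inr hp)
      have h3 := h1.sub h2; simp only [mul_one] at h3; exact h3
    apply monotoneOn_of_deriv_nonneg (convex_Ici 0) hcont
    · intro t ht
      exact ((hderiv t).differentiableAt).differentiableWithinAt
    · intro t ht
      rw [interior_Ici] at ht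
      rw [(hderiv t).deriv]
      have ht0 : (0:ℝ) ≤ t := le_of_lt ht
      have : t^(p-1) ≤ (t+δ)^(p-1) :=
        Real.rpow_le_rpow ht0 (by linarith) (by linarith)
      nlinarith [this, hp]
  exact hmono (Set.mem_Ici.2 hA) (Set.mem_Ici.2 (hA.trans hAB)) hAB

section
variable {b : ℝ}


lemma r_summable' (hb : 1 < b) (m : ℕ) : Summable (fun i : ℕ => ((m+i:ℕ):ℝ)^(-b)) := by
  have h0 : Summable (fun n : ℕ => (n:ℝ)^(-b)) := Real.summable_nat_rpow.2 (by linarith)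
  have := (summable_nat_add_iff (f := fun n : ℕ => (n:ℝ)^(-b)) m).2 h0
  apply this.congr
  intro i
  congr 2
  omega

lemma r_nonneg' (b : ℝ) (j : ℕ) : (0:ℝ) ≤ ((j:ℕ):ℝ)^(-b) := rpow_nonneg (by positivity) _

-- block comparison
lemma block_bound (hb : 1 < b) {K : ℕ} (hK : 1 ≤ K) :
    (K:ℝ)^(1-b) * (∑' j : ℕ, ((j+2:ℕ):ℝ)^(-b)) ≤ ∑' i : ℕ, ((K+1+i:ℕ):ℝ)^(-b) := by
  have hK0 : (0:ℝ) < (K:ℝ) := by exact_mod_cast hK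
  have hsum2 : Summable (fun j : ℕ => ((j+2:ℕ):ℝ)^(-b)) := by
    apply (r_summable' hb 2).congr; intro i; congr 2; omega
  have hsumK : Summable (fun i : ℕ => ((K+1+i:ℕ):ℝ)^(-b)) := by
    apply (r_summable' hb (K+1)).congr; intro i; congr 2
  rw [← tsum_mul_left]
  apply Real.tsum_le_of_sum_range_le (fun q => mul_nonneg (rpow_nonneg hK0.le _) (r_nonneg' b _))
  intro Q
  have hfin : ∀ Q : ℕ, ∑ q ∈ Finset.range Q, (K:ℝ)^(1-b) * ((q+2:ℕ):ℝ)^(-b)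
      ≤ ∑ i ∈ Finset.range (Q*K), ((K+1+i:ℕ):ℝ)^(-b) := by
    intro Q
    induction Q with
    | zero => simp
    | succ Q ih =>
      have hr : (Q+1)*K = Q*K + K := by ring
      have hsplit : ∑ i ∈ Finset.range (Q*K+K), ((K+1+i:ℕ):ℝ)^(-b)
          = ∑ i ∈ Finset.range (Q*K), ((K+1+i:ℕ):ℝ)^(-b)
            + ∑ i ∈ Finset.Ico (Q*K) (Q*K+K), ((K+1+i:ℕ):ℝ)^(-b) := by
        rw [Finset.range_eq_Ico,
          ← Finset.sum_Ico_consecutive _ (Nat.zero_le (Q*K)) (Nat.le_add_right (Q*K) K), Finset.range_eq_Ico]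
      rw [Finset.sum_range_succ, hr, hsplit]
      apply add_le_add ih
      -- block: K terms each ≥ ((Q+2)K)^{-b}
      have hterm : ∀ i ∈ Finset.Ico (Q*K) (Q*K+K),
          (((Q+2)*K:ℕ):ℝ)^(-b) ≤ ((K+1+i:ℕ):ℝ)^(-b) := by
        intro i hi
        rcases Finset.mem_Ico.1 hi with ⟨h1, h2⟩
        apply Real.rpow_le_rpow_of_nonpos (by positivity) ?_ (by linarith)
        exact_mod_cast (show K+1+i ≤ (Q+2)*K by nlinarith [h2, hK])
      have hcard : (Finset.Ico (Q*K) (Q*K+K)).card = K := by simp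
      calc (K:ℝ)^(1-b) * ((Q+2:ℕ):ℝ)^(-b)
          = (K:ℝ) * (((Q+2)*K:ℕ):ℝ)^(-b) := by
            push_cast
            rw [Real.mul_rpow (by positivity) (by positivity)]
            rw [show (1:ℝ)-b = 1 + (-b) by ring, Real.rpow_add hK0, Real.rpow_one]
            ring
        _ = (Finset.Ico (Q*K) (Q*K+K)).card • (((Q+2)*K:ℕ):ℝ)^(-b) := by
            rw [hcard]; rw [nsmul_eq_mul]
        _ ≤ ∑ i ∈ Finset.Ico (Q*K) (Q*K+K), ((K+1+i:ℕ):ℝ)^(-b) :=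
            Finset.card_nsmul_le_sum _ _ _ hterm
    
  exact (hfin Q).trans (Summable.sum_le_tsum _ (fun i _ => r_nonneg' b _) hsumK)



-- core swap lemma
lemma core_swap (hb : 1 < b) (G : ℕ → ℝ) (hG0 : G 0 = 0) (hGmono : Monotone G) (M : ℕ) :
    ∑ m ∈ Icc 1 M, (G m - G (m-1)) * (∑' i : ℕ, ((m+i:ℕ):ℝ)^(-b))
      = ∑' j : ℕ, ((j+1:ℕ):ℝ)^(-b) * G (min (j+1) M) := by
  classical
  set F : ℕ → ℕ → ℝ := fun m j => if m ≤ j+1 then (G m - G (m-1)) * ((j+1:ℕ):ℝ)^(-b) else 0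
    with hF
  have hrs : Summable (fun j : ℕ => ((j+1:ℕ):ℝ)^(-b)) := by
    have := r_summable' hb 1
    apply this.congr; intro i; congr 2; omega
  have hcnn : ∀ m : ℕ, 0 ≤ G m - G (m-1) := fun m => sub_nonneg.2 (hGmono (Nat.sub_le m 1))
  have hFsummable : ∀ m : ℕ, Summable (F m) := by
    intro m
    apply Summable.of_nonneg_of_le (fun j => ?_) (fun j => ?_) (hrs.mul_left (G m - G (m-1)))
    · rw [hF]; dsimp only
      split
      · exact mul_nonneg (hcnn m) (r_nonneg' b _)
      · exact le_refl 0
    · rw [hF]; dsimp only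
      split
      · exact le_refl _
      · exact mul_nonneg (hcnn m) (r_nonneg' b _)
  have hFtsum : ∀ m, 1 ≤ m → ∑' j, F m j
      = (G m - G (m-1)) * (∑' i : ℕ, ((m+i:ℕ):ℝ)^(-b)) := by
    intro m hm
    have hinj : Function.Injective (fun i : ℕ => (m-1) + i) := fun i j h => by
      simp only [add_right_inj] at h; exact h
    have hsupp : Function.support (F m) ⊆ Set.range (fun i : ℕ => (m-1) + i) := by
      intro j hj
      rw [Function.mem_support, hF] at hj
      dsimp only at hj
      by_cases h : m ≤ j+1
      · exact ⟨j - (m-1), show (m-1) + (j - (m-1)) = j by omega⟩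
      · simp [h] at hj
    rw [← hinj.tsum_eq hsupp, tsum_congr (fun i => ?_), tsum_mul_left]
    rw [hF]; dsimp only
    rw [if_pos (by omega)]
    congr 3
    omega
  rw [Finset.sum_congr rfl (fun m hm => (hFtsum m (Finset.mem_Icc.1 hm).1).symm)]
  rw [← Summable.tsum_finsetSum (fun m _ => hFsummable m)]
  apply tsum_congr
  intro j
  have hfilter : ∀ m, m ∈ Icc 1 M → (F m j ≠ 0 → m ≤ j+1) := by
    intro m _ h
    by_contra hc
    rw [hF] at h; dsimp only at h; rw [if_neg hc] at h; exact h rfl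
  have : ∑ m ∈ Icc 1 M, F m j = ∑ m ∈ Icc 1 (min (j+1) M), (G m - G (m-1)) * ((j+1:ℕ):ℝ)^(-b) := by
    rw [← Finset.sum_filter_ne_zero]
    rw [show (Icc 1 M).filter (fun m => F m j ≠ 0)
        = (Icc 1 (min (j+1) M)).filter (fun m => F m j ≠ 0) by
      ext m
      simp only [Finset.mem_filter, Finset.mem_Icc]
      constructor
      · rintro ⟨⟨h1, h2⟩, h3⟩
        exact ⟨⟨h1, le_min (hfilter m (Finset.mem_Icc.2 ⟨h1, h2⟩) h3) h2⟩, h3⟩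
      · rintro ⟨⟨h1, h2⟩, h3⟩
        exact ⟨⟨h1, h2.trans (min_le_right _ _)⟩, h3⟩]
    rw [Finset.sum_filter_ne_zero]
    apply Finset.sum_congr rfl
    intro m hm
    rw [hF]; dsimp only
    rw [if_pos (by have := (Finset.mem_Icc.1 hm).2; omega)]
  rw [this, ← Finset.sum_mul]
  rw [show ∑ m ∈ Icc 1 (min (j+1) M), (G m - G (m-1)) = G (min (j+1) M) by
    rw [show Icc 1 (min (j+1) M) = Ico 1 (min (j+1) M + 1) by rw [Finset.Ico_add_one_right_eq_Icc],
      Finset.sum_Ico_eq_sum_range]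
    simp only [Nat.add_sub_cancel]
    rw [Finset.sum_congr rfl (fun i _ => ?_), Finset.sum_range_sub (fun t => G t)]
    · rw [hG0, sub_zero]
    · show G (1+i) - G (1+i-1) = G (i+1) - G i
      congr 2 <;> omega]
  ring

end

lemma W_ge {p a : ℝ} (hp : 1 < p) (ha0 : 0 ≤ a) (ha : a < p - 1) (K : ℕ) :
    (∑' i : ℕ, ((1+i:ℕ):ℝ)^(-(p-a))) * ∑ m ∈ Icc 1 K, (m:ℝ)^a
      ≤ ∑ m ∈ Icc 1 K, ((m:ℝ)^p - ((m-1:ℕ):ℝ)^p) * (∑' i : ℕ, ((m+i:ℕ):ℝ)^(-(p-a))) := by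
  set b : ℝ := p - a with hbdef
  have hb : 1 < b := by rw [hbdef]; linarith
  have hp0 : (0:ℝ) < p := by linarith
  rcases Nat.eq_zero_or_pos K with rfl | hK
  · simp
  have hK0 : (0:ℝ) < (K:ℝ) := by exact_mod_cast hK
  set G : ℕ → ℝ := fun m => ((m:ℕ):ℝ)^p with hGdef
  have hG0 : G 0 = 0 := by simp [hGdef, Real.zero_rpow hp0.ne']
  have hGmono : Monotone G := by
    intro i j hij
    exact Real.rpow_le_rpow (by positivity) (by exact_mod_cast hij) hp0.le
  have hcore := core_swap hb G hG0 hGmono K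
  have hgm : ∀ m : ℕ, G m - G (m-1) = (m:ℝ)^p - ((m-1:ℕ):ℝ)^p := fun m => rfl
  rw [show ∑ m ∈ Icc 1 K, ((m:ℝ)^p - ((m-1:ℕ):ℝ)^p) * (∑' i : ℕ, ((m+i:ℕ):ℝ)^(-b))
      = ∑ m ∈ Icc 1 K, (G m - G (m-1)) * (∑' i : ℕ, ((m+i:ℕ):ℝ)^(-b)) from rfl, hcore]
  -- summability of the evaluated series
  have hs1 : Summable (fun j : ℕ => ((j+1:ℕ):ℝ)^(-b)) := by
    apply (r_summable' hb 1).congr; intro i; congr 2; omega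
  have hsf : Summable (fun j : ℕ => ((j+1:ℕ):ℝ)^(-b) * G (min (j+1) K)) := by
    apply Summable.of_nonneg_of_le (fun j => mul_nonneg (r_nonneg' b _) ?_)
      (fun j => ?_) (hs1.mul_right ((K:ℝ)^p))
    · rw [hGdef]; positivity
    · apply mul_le_mul_of_nonneg_left _ (r_nonneg' b _)
      rw [hGdef]
      exact Real.rpow_le_rpow (by positivity) (by exact_mod_cast min_le_right (j+1) K) hp0.le
  -- split
  have hsplit := Summable.sum_add_tsum_nat_add K hsf
  rw [← hsplit]
  -- head evaluates to A_K
  have hhead : ∑ j ∈ Finset.range K, ((j+1:ℕ):ℝ)^(-b) * G (min (j+1) K)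
      = ∑ m ∈ Icc 1 K, (m:ℝ)^a := by
    rw [show Icc 1 K = Ico 1 (K+1) by rw [Finset.Ico_add_one_right_eq_Icc], Finset.sum_Ico_eq_sum_range]
    simp only [Nat.add_sub_cancel]
    apply Finset.sum_congr rfl
    intro j hj
    have hjK : j + 1 ≤ K := by have := Finset.mem_range.1 hj; omega
    rw [min_eq_left hjK, hGdef]
    dsimp only
    rw [← Real.rpow_add (by positivity : (0:ℝ) < ((j+1:ℕ):ℝ))]
    rw [show -b + p = a by rw [hbdef]; ring]
    congr 2
    omega
  -- tail
  have htail : ∑' i : ℕ, ((i+K+1:ℕ):ℝ)^(-b) * G (min (i+K+1) K)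
      = (∑' i : ℕ, ((K+1+i:ℕ):ℝ)^(-b)) * (K:ℝ)^p := by
    rw [← tsum_mul_right]
    apply tsum_congr
    intro i
    rw [min_eq_right (by omega), hGdef]
    congr 3
    omega
  have htail' : ∑' i : ℕ, ((i+K+1:ℕ):ℝ)^(-b) * G (min (i+K+1) K)
      ≥ (∑' j : ℕ, ((j+2:ℕ):ℝ)^(-b)) * ∑ m ∈ Icc 1 K, (m:ℝ)^a := by
    rw [htail]
    have hAK : ∑ m ∈ Icc 1 K, (m:ℝ)^a ≤ (K:ℝ)^(a+1) := by
      calc ∑ m ∈ Icc 1 K, (m:ℝ)^a ≤ ∑ m ∈ Icc 1 K, (K:ℝ)^a := by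
            apply Finset.sum_le_sum
            intro m hm
            exact Real.rpow_le_rpow (by positivity)
              (by exact_mod_cast (Finset.mem_Icc.1 hm).2) ha0
        _ = (K:ℝ) * (K:ℝ)^a := by
            rw [Finset.sum_const, Nat.card_Icc]
            simp [nsmul_eq_mul]
        _ = (K:ℝ)^(a+1) := by
            rw [Real.rpow_add hK0, Real.rpow_one]; ring
    have hR2nn : (0:ℝ) ≤ ∑' j : ℕ, ((j+2:ℕ):ℝ)^(-b) := tsum_nonneg (fun j => r_nonneg' b _)
    calc (∑' j : ℕ, ((j+2:ℕ):ℝ)^(-b)) * ∑ m ∈ Icc 1 K, (m:ℝ)^a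
        ≤ (∑' j : ℕ, ((j+2:ℕ):ℝ)^(-b)) * (K:ℝ)^(a+1) :=
          mul_le_mul_of_nonneg_left hAK hR2nn
      _ = ((K:ℝ)^(1-b) * (∑' j : ℕ, ((j+2:ℕ):ℝ)^(-b))) * (K:ℝ)^p := by
          rw [show (K:ℝ)^(a+1) = (K:ℝ)^(1-b) * (K:ℝ)^p by
            rw [← Real.rpow_add hK0]
            congr 1
            rw [hbdef]; ring]
          ring
      _ ≤ (∑' i : ℕ, ((K+1+i:ℕ):ℝ)^(-b)) * (K:ℝ)^p :=
          mul_le_mul_of_nonneg_right (block_bound hb hK) (rpow_nonneg hK0.le p)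
  -- zeta split
  have hzeta : ∑' i : ℕ, ((1+i:ℕ):ℝ)^(-b) = 1 + ∑' j : ℕ, ((j+2:ℕ):ℝ)^(-b) := by
    rw [Summable.tsum_eq_zero_add (r_summable' hb 1)]
    congr 1
    · norm_num
    · apply tsum_congr; intro i; congr 2; omega
  have hAnn : (0:ℝ) ≤ ∑ m ∈ Icc 1 K, (m:ℝ)^a :=
    Finset.sum_nonneg (fun m _ => rpow_nonneg (by positivity) _)
  rw [hzeta, hhead]
  nlinarith [htail', hAnn]

lemma abel_id (w u : ℕ → ℝ) (M : ℕ) :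
    ∑ m ∈ Icc 1 M, w m * u m
      = ∑ k ∈ Ico 1 M, (u k - u (k+1)) * (∑ m ∈ Icc 1 k, w m)
        + u M * ∑ m ∈ Icc 1 M, w m := by
  induction M with
  | zero => simp
  | succ M ih =>
    rcases Nat.eq_zero_or_pos M with rfl | hM
    · simp [mul_comm]
    have h1 : ∑ m ∈ Icc 1 (M+1), w m * u m = (∑ m ∈ Icc 1 M, w m * u m) + w (M+1) * u (M+1) :=
      Finset.sum_Icc_succ_top (by omega) _
    have h2 : ∑ m ∈ Icc 1 (M+1), w m = (∑ m ∈ Icc 1 M, w m) + w (M+1) :=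
      Finset.sum_Icc_succ_top (by omega) _
    have h3 : ∑ k ∈ Ico 1 (M+1), (u k - u (k+1)) * (∑ m ∈ Icc 1 k, w m)
        = ∑ k ∈ Ico 1 M, (u k - u (k+1)) * (∑ m ∈ Icc 1 k, w m)
          + (u M - u (M+1)) * (∑ m ∈ Icc 1 M, w m) :=
      Finset.sum_Ico_succ_top (by omega) _
    rw [h1, ih, h3, h2]
    ring

lemma layer_le (w w' u : ℕ → ℝ) (hu : ∀ k, 1 ≤ k → u (k+1) ≤ u k)
    (hu0 : ∀ k, 1 ≤ k → 0 ≤ u k)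
    (hW : ∀ K, ∑ m ∈ Icc 1 K, w' m ≤ ∑ m ∈ Icc 1 K, w m) (M : ℕ) :
    ∑ m ∈ Icc 1 M, w' m * u m ≤ ∑ m ∈ Icc 1 M, w m * u m := by
  rcases Nat.eq_zero_or_pos M with rfl | hM
  · simp
  rw [abel_id w u M, abel_id w' u M]
  apply add_le_add
  · apply Finset.sum_le_sum
    intro k hk
    have hk1 : 1 ≤ k := (Finset.mem_Ico.1 hk).1
    exact mul_le_mul_of_nonneg_left (hW k) (by have := hu k hk1; linarith)
  · exact mul_le_mul_of_nonneg_left (hW M) (hu0 M hM)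

lemma L_summable {p a : ℝ} (hp : 1 < p) (ha0 : 0 ≤ a) (ha : a < p - 1)
    (x : ℕ → ℝ) (hnonneg : ∀ n, 1 ≤ n → 0 ≤ x n)
    (hsum : Summable (fun n : ℕ => (x (n + 1)) ^ p * ((n + 1 : ℕ) : ℝ) ^ a)) :
    Summable (fun n : ℕ => ((n+1:ℕ):ℝ)^(-(p-a)) * (∑ k ∈ Icc 1 (n+1), x k)^p) := by
  have hp1 : (0:ℝ) < p - 1 := by linarith
  have hp0 : (0:ℝ) < p := by linarith
  set α : ℝ := (a+p-1)/(2*p) with hα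
  set β : ℝ := (a+p-1)/(2*(p-1)) with hβ
  set β₂ : ℝ := (p+1-a)/2 with hβ₂
  have hβ0 : 0 < β := by rw [hβ]; exact div_pos (by linarith) (by linarith)
  have hβ1 : β < 1 := by rw [hβ, div_lt_one (by linarith)]; linarith
  have hβ₂1 : 1 < β₂ := by rw [hβ₂]; linarith
  set q : ℝ := p/(p-1) with hq
  have hpq : p.HolderConjugate q := (Real.holderConjugate_iff_eq_conjExponent hp).2 hq
  have hαq : (-α) * q = -β := by rw [hα, hβ, hq]; field_simp
  have hαp : α * p = (a+p-1)/2 := by rw [hα]; field_simp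
  set S : ℕ → ℝ := fun n => ∑ k ∈ Icc 1 n, x k with hS
  set X : ℕ → ℝ := fun n => ∑ k ∈ Icc 1 n, (x k)^p * (k:ℝ)^(α*p) with hX
  have hSnn : ∀ n, 0 ≤ S n := fun n =>
    Finset.sum_nonneg (fun k hk => hnonneg k (Finset.mem_Icc.1 hk).1)
  have hXnn : ∀ n, 0 ≤ X n := fun n =>
    Finset.sum_nonneg (fun k hk => mul_nonneg
      (rpow_nonneg (hnonneg k (Finset.mem_Icc.1 hk).1) p) (rpow_nonneg (by positivity) _))
  set C₂ : ℝ := ((1-β)⁻¹)^(p-1) with hC₂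
  set C₃ : ℝ := 1 + (β₂-1)⁻¹ with hC₃
  have hC₂nn : 0 ≤ C₂ := rpow_nonneg (by rw [inv_nonneg]; linarith) _
  have hC₃nn : 0 ≤ C₃ := by
    have : 0 ≤ (β₂-1)⁻¹ := by rw [inv_nonneg]; linarith
    rw [hC₃]; linarith
  have hterm : ∀ n : ℕ, 1 ≤ n → (n:ℝ)^(-(p-a)) * (S n)^p ≤ C₂ * ((n:ℝ)^(-β₂) * X n) := by
    intro n hn
    have hn0 : (0:ℝ) < (n:ℝ) := by exact_mod_cast hn
    set Y : ℝ := ∑ k ∈ Icc 1 n, (k:ℝ)^(-β) with hY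
    have hYnn : 0 ≤ Y :=
      Finset.sum_nonneg (fun k _ => rpow_nonneg (by positivity) _)
    have hHold : S n ≤ (X n) ^ (1/p) * Y ^ (1/q) := by
      have h := Real.inner_le_Lp_mul_Lq_of_nonneg (Icc 1 n)
        (f := fun k => x k * (k:ℝ)^α) (g := fun k => (k:ℝ)^(-α)) hpq
        (fun k hk => mul_nonneg (hnonneg k (Finset.mem_Icc.1 hk).1)
          (rpow_nonneg (by positivity) _))
        (fun k _ => rpow_nonneg (by positivity) _)
      have e1 : ∑ k ∈ Icc 1 n, (x k * (k:ℝ)^α) * (k:ℝ)^(-α) = S n := by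
        apply Finset.sum_congr rfl
        intro k hk
        have hk0 : (0:ℝ) < (k:ℝ) := by exact_mod_cast (Finset.mem_Icc.1 hk).1
        rw [mul_assoc, ← Real.rpow_add hk0, add_neg_cancel, Real.rpow_zero, mul_one]
      have e2 : ∑ k ∈ Icc 1 n, (x k * (k:ℝ)^α)^p = X n := by
        apply Finset.sum_congr rfl
        intro k hk
        have hk0 : (0:ℝ) < (k:ℝ) := by exact_mod_cast (Finset.mem_Icc.1 hk).1
        rw [Real.mul_rpow (hnonneg k (Finset.mem_Icc.1 hk).1) (rpow_nonneg hk0.le _),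
          ← Real.rpow_mul hk0.le]
      have e3 : ∑ k ∈ Icc 1 n, ((k:ℝ)^(-α))^q = Y := by
        apply Finset.sum_congr rfl
        intro k hk
        have hk0 : (0:ℝ) < (k:ℝ) := by exact_mod_cast (Finset.mem_Icc.1 hk).1
        rw [← Real.rpow_mul hk0.le, hαq]
      rw [e1, e2, e3] at h
      exact h
    have hpow : (S n)^p ≤ X n * ((1-β)⁻¹ * (n:ℝ)^(1-β))^(p-1) := by
      have h1 : (S n)^p ≤ ((X n)^(1/p) * Y^(1/q))^p :=
        Real.rpow_le_rpow (hSnn n) hHold hp0.le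
      have h2 : ((X n)^(1/p) * Y^(1/q))^p = X n * Y^(p-1) := by
        rw [Real.mul_rpow (rpow_nonneg (hXnn n) _) (rpow_nonneg hYnn _),
          ← Real.rpow_mul (hXnn n), ← Real.rpow_mul hYnn,
          show 1/p * p = 1 by field_simp,
          show 1/q * p = p - 1 by rw [hq]; field_simp,
          Real.rpow_one]
      have h3 : Y^(p-1) ≤ ((1-β)⁻¹ * (n:ℝ)^(1-β))^(p-1) :=
        Real.rpow_le_rpow hYnn (head_sum hβ0 hβ1 n) (by linarith)
      calc (S n)^p ≤ X n * Y^(p-1) := by rw [← h2]; exact h1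
        _ ≤ X n * ((1-β)⁻¹ * (n:ℝ)^(1-β))^(p-1) :=
            mul_le_mul_of_nonneg_left h3 (hXnn n)
    have hconst : ((1-β)⁻¹ * (n:ℝ)^(1-β))^(p-1) = C₂ * (n:ℝ)^((1-β)*(p-1)) := by
      rw [Real.mul_rpow (by rw [inv_nonneg]; linarith) (rpow_nonneg hn0.le _),
        ← Real.rpow_mul hn0.le]
    have hexp : (n:ℝ)^(-(p-a)) * (n:ℝ)^((1-β)*(p-1)) = (n:ℝ)^(-β₂) := by
      rw [← Real.rpow_add hn0]
      congr 1
      rw [hβ, hβ₂]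
      field_simp
      ring
    calc (n:ℝ)^(-(p-a)) * (S n)^p
        ≤ (n:ℝ)^(-(p-a)) * (X n * ((1-β)⁻¹ * (n:ℝ)^(1-β))^(p-1)) :=
          mul_le_mul_of_nonneg_left hpow (rpow_nonneg hn0.le _)
      _ = C₂ * (((n:ℝ)^(-(p-a)) * (n:ℝ)^((1-β)*(p-1))) * X n) := by
          rw [hconst]; ring
      _ = C₂ * ((n:ℝ)^(-β₂) * X n) := by rw [hexp]
  -- partial sums bounded
  set Sig : ℝ := ∑' n : ℕ, (x (n + 1)) ^ p * ((n + 1 : ℕ) : ℝ) ^ a with hSig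
  apply summable_of_sum_range_le (c := C₂ * (C₃ * Sig))
  · intro n
    exact mul_nonneg (rpow_nonneg (by positivity) _) (rpow_nonneg (hSnn (n+1)) p)
  · intro N
    have step1 : ∑ n ∈ Finset.range N, ((n+1:ℕ):ℝ)^(-(p-a)) * (S (n+1))^p
        ≤ C₂ * ∑ n ∈ Finset.range N, ((n+1:ℕ):ℝ)^(-β₂) * X (n+1) := by
      rw [Finset.mul_sum]
      apply Finset.sum_le_sum
      intro n _
      exact hterm (n+1) (by omega)
    have swap : ∑ n ∈ Finset.range N, ((n+1:ℕ):ℝ)^(-β₂) * X (n+1)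
        = ∑ k ∈ Icc 1 N, ((x k)^p * (k:ℝ)^(α*p))
            * ∑ n ∈ Icc (k-1) (N-1), ((n+1:ℕ):ℝ)^(-β₂) := by
      have expand : ∀ n : ℕ, ((n+1:ℕ):ℝ)^(-β₂) * X (n+1)
          = ∑ k ∈ Icc 1 (n+1), ((n+1:ℕ):ℝ)^(-β₂) * ((x k)^p * (k:ℝ)^(α*p)) := by
        intro n
        rw [hX]
        dsimp only
        rw [Finset.mul_sum]
      rw [Finset.sum_congr rfl (fun n _ => expand n)]
      rw [Finset.sum_comm' (s := Finset.range N) (t := fun n => Icc 1 (n+1))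
        (t' := Icc 1 N) (s' := fun k => Icc (k-1) (N-1)) ?_]
      · apply Finset.sum_congr rfl
        intro k _
        rw [Finset.mul_sum]
        apply Finset.sum_congr rfl
        intro n _
        ring
      · intro n k
        simp only [Finset.mem_range, Finset.mem_Icc]
        omega
    have inner_bound : ∀ k ∈ Icc 1 N,
        ((x k)^p * (k:ℝ)^(α*p)) * ∑ n ∈ Icc (k-1) (N-1), ((n+1:ℕ):ℝ)^(-β₂)
          ≤ C₃ * ((x k)^p * (k:ℝ)^a) := by
      intro k hk
      rcases Finset.mem_Icc.1 hk with ⟨hk1, hkN⟩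
      have hk0 : (0:ℝ) < (k:ℝ) := by exact_mod_cast hk1
      have hreind : ∑ n ∈ Icc (k-1) (N-1), ((n+1:ℕ):ℝ)^(-β₂)
          = ∑ j ∈ Icc k N, (j:ℝ)^(-β₂) := by
        have hmap : Finset.Icc k N
            = (Finset.Icc (k-1) (N-1)).map ⟨fun n => n+1, fun u v h => by simpa using h⟩ := by
          ext j
          simp only [Finset.mem_map, Finset.mem_Icc, Function.Embedding.coeFn_mk]
          constructor
          · rintro ⟨h1, h2⟩
            exact ⟨j-1, ⟨by omega, by omega⟩, by show j-1+1 = j; omega⟩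
          · rintro ⟨u, ⟨h1, h2⟩, rfl⟩
            show k ≤ u+1 ∧ u+1 ≤ N; constructor <;> omega
        rw [hmap, Finset.sum_map]
        rfl
      rw [hreind]
      have htail := tail_sum hβ₂1 hk1 N
      have hxknn : (0:ℝ) ≤ (x k)^p * (k:ℝ)^(α*p) :=
        mul_nonneg (rpow_nonneg (hnonneg k hk1) p) (rpow_nonneg hk0.le _)
      calc ((x k)^p * (k:ℝ)^(α*p)) * ∑ j ∈ Icc k N, (j:ℝ)^(-β₂)
          ≤ ((x k)^p * (k:ℝ)^(α*p)) * (C₃ * (k:ℝ)^(1-β₂)) :=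
            mul_le_mul_of_nonneg_left htail hxknn
        _ = C₃ * ((x k)^p * ((k:ℝ)^(α*p) * (k:ℝ)^(1-β₂))) := by ring
        _ = C₃ * ((x k)^p * (k:ℝ)^a) := by
            rw [← Real.rpow_add hk0]
            congr 2
            rw [hαp, hβ₂]
            ring
    have last : ∑ k ∈ Icc 1 N, (x k)^p * (k:ℝ)^a ≤ Sig := by
      have hmap2 : Finset.Icc 1 N = (Finset.range N).map ⟨fun n => n+1, fun u v h => by simpa using h⟩ := by
        ext j
        simp only [Finset.mem_map, Finset.mem_range, Finset.mem_Icc, Function.Embedding.coeFn_mk]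
        constructor
        · rintro ⟨h1, h2⟩
          exact ⟨j-1, by omega, by show j-1+1 = j; omega⟩
        · rintro ⟨u, h1, rfl⟩
          show 1 ≤ u+1 ∧ u+1 ≤ N; omega
      rw [hmap2, Finset.sum_map]
      exact Summable.sum_le_tsum (Finset.range N)
        (fun i _ => mul_nonneg (rpow_nonneg (hnonneg (i+1) (by omega)) p)
          (rpow_nonneg (by positivity) _)) hsum
    calc ∑ n ∈ Finset.range N, ((n+1:ℕ):ℝ)^(-(p-a)) * (S (n+1))^p
        ≤ C₂ * ∑ n ∈ Finset.range N, ((n+1:ℕ):ℝ)^(-β₂) * X (n+1) := step1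
      _ = C₂ * ∑ k ∈ Icc 1 N, ((x k)^p * (k:ℝ)^(α*p))
            * ∑ n ∈ Icc (k-1) (N-1), ((n+1:ℕ):ℝ)^(-β₂) := by rw [swap]
      _ ≤ C₂ * ∑ k ∈ Icc 1 N, C₃ * ((x k)^p * (k:ℝ)^a) := by
          apply mul_le_mul_of_nonneg_left (Finset.sum_le_sum inner_bound) hC₂nn
      _ = C₂ * (C₃ * ∑ k ∈ Icc 1 N, (x k)^p * (k:ℝ)^a) := by rw [← Finset.mul_sum]
      _ ≤ C₂ * (C₃ * Sig) := by
          apply mul_le_mul_of_nonneg_left (mul_le_mul_of_nonneg_left last hC₃nn) hC₂nn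

theorem stmt3 (p a : ℝ) (hp : 1 < p) (ha0 : 0 ≤ a) (ha : a < p - 1)
    (x : ℕ → ℝ)
    (hnonneg : ∀ n, 1 ≤ n → 0 ≤ x n)
    (hmono : ∀ m n, 1 ≤ m → m ≤ n → x n ≤ x m)
    (hsum : Summable (fun n : ℕ => (x (n + 1)) ^ p * ((n + 1 : ℕ) : ℝ) ^ a)) :
    ∑' n : ℕ, ((n + 1 : ℕ) : ℝ) ^ a *
        ((∑ k ∈ Finset.Icc 1 (n + 1), x k) / ((n + 1 : ℕ) : ℝ)) ^ p
      ≥ (∑' k : ℕ, ((k + 1 : ℕ) : ℝ) ^ (-(p - a))) *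
          ∑' n : ℕ, ((n + 1 : ℕ) : ℝ) ^ a * (x (n + 1)) ^ p := by
  have hp0 : (0:ℝ) < p := by linarith
  have hb : 1 < p - a := by linarith
  set S : ℕ → ℝ := fun n => ∑ k ∈ Icc 1 n, x k with hS
  have hSnn : ∀ n, 0 ≤ S n := fun n =>
    Finset.sum_nonneg (fun k hk => hnonneg k (Finset.mem_Icc.1 hk).1)
  have hSmono : Monotone S := by
    apply monotone_nat_of_le_succ
    intro n
    rw [hS]
    dsimp only
    rw [Finset.sum_Icc_succ_top (by omega : 1 ≤ n+1)]
    have := hnonneg (n+1) (by omega)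
    linarith
  set L : ℕ → ℝ := fun n => ((n+1:ℕ):ℝ)^(-(p-a)) * (S (n+1))^p with hL
  have hLsum : Summable L := L_summable hp ha0 ha x hnonneg hsum
  have hLnn : ∀ n, 0 ≤ L n := fun n =>
    mul_nonneg (r_nonneg' _ _) (rpow_nonneg (hSnn _) _)
  -- rewrite statement LHS
  have hLHS : ∑' n : ℕ, ((n + 1 : ℕ) : ℝ) ^ a *
      ((∑ k ∈ Finset.Icc 1 (n + 1), x k) / ((n + 1 : ℕ) : ℝ)) ^ p = ∑' n, L n := by
    apply tsum_congr
    intro n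
    have hc0 : (0:ℝ) < ((n+1:ℕ):ℝ) := by positivity
    rw [Real.div_rpow (hSnn (n+1)) hc0.le, div_eq_mul_inv, ← Real.rpow_neg hc0.le]
    rw [hL]
    dsimp only
    rw [show ((n+1:ℕ):ℝ)^a * ((S (n+1))^p * ((n+1:ℕ):ℝ)^(-p))
        = (((n+1:ℕ):ℝ)^a * ((n+1:ℕ):ℝ)^(-p)) * (S (n+1))^p by ring,
      ← Real.rpow_add hc0, show a + -p = -(p-a) by ring]
  set zeta : ℝ := ∑' i : ℕ, ((1+i:ℕ):ℝ)^(-(p-a)) with hzeta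
  have hzeta_eq : ∑' k : ℕ, ((k + 1 : ℕ) : ℝ) ^ (-(p - a)) = zeta := by
    apply tsum_congr
    intro k
    congr 2
    omega
  have hzeta_nn : 0 ≤ zeta := tsum_nonneg (fun i => r_nonneg' _ _)
  set u : ℕ → ℝ := fun m => (x m)^p with hu
  set R : ℕ → ℝ := fun m => ∑' i : ℕ, ((m+i:ℕ):ℝ)^(-(p-a)) with hR
  have hRnn : ∀ m, 0 ≤ R m := fun m => tsum_nonneg (fun i => r_nonneg' _ _)
  set w : ℕ → ℝ := fun m => ((m:ℝ)^p - ((m-1:ℕ):ℝ)^p) * R m with hw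
  set Gx : ℕ → ℝ := fun m => (S m)^p with hGx
  have hGx0 : Gx 0 = 0 := by
    rw [hGx]
    dsimp only
    rw [hS]
    dsimp only
    rw [show Finset.Icc 1 0 = (∅ : Finset ℕ) by rfl]
    simp [Real.zero_rpow hp0.ne']
  have hGxmono : Monotone Gx := fun i j hij =>
    Real.rpow_le_rpow (hSnn i) (hSmono hij) hp0.le
  -- the main partial-sum estimate
  have hpartial : ∀ M : ℕ, zeta * ∑ m ∈ Icc 1 M, (m:ℝ)^a * u m ≤ ∑' n, L n := by
    intro M
    have step_layer : ∑ m ∈ Icc 1 M, (zeta * (m:ℝ)^a) * u m ≤ ∑ m ∈ Icc 1 M, w m * u m := by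
      apply layer_le
      · intro k hk
        rw [hu]
        exact Real.rpow_le_rpow (hnonneg (k+1) (by omega)) (hmono k (k+1) hk (by omega)) hp0.le
      · intro k hk
        exact rpow_nonneg (hnonneg k hk) p
      · intro K
        have := W_ge hp ha0 ha K
        rw [← hzeta] at this
        rw [← Finset.mul_sum] at *
        exact this
    have step_perm : ∑ m ∈ Icc 1 M, w m * u m
        ≤ ∑ m ∈ Icc 1 M, (Gx m - Gx (m-1)) * R m := by
      apply Finset.sum_le_sum
      intro m hm
      obtain ⟨t, rfl⟩ : ∃ t, m = t + 1 := ⟨m - 1, by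
        have := (Finset.mem_Icc.1 hm).1; omega⟩
      have hdiff : ((t+1:ℕ):ℝ)^p * u (t+1) - ((t:ℕ):ℝ)^p * u (t+1)
          ≤ Gx (t+1) - Gx t := by
        have hxnn : 0 ≤ x (t+1) := hnonneg (t+1) (by omega)
        have hA : (0:ℝ) ≤ ((t:ℕ):ℝ) * x (t+1) := mul_nonneg (by positivity) hxnn
        have hAB : ((t:ℕ):ℝ) * x (t+1) ≤ S t := by
          have hcard := Finset.card_nsmul_le_sum (Finset.Icc 1 t) x (x (t+1))
            (fun k hk => hmono k (t+1) (Finset.mem_Icc.1 hk).1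
              (by have := (Finset.mem_Icc.1 hk).2; omega))
          rw [Nat.card_Icc, nsmul_eq_mul] at hcard
          simpa using hcard
        have := rpow_diff_mono (le_of_lt hp) hxnn hA hAB
        have hBd : S t + x (t+1) = S (t+1) := by
          rw [hS]
          dsimp only
          rw [Finset.sum_Icc_succ_top (by omega : 1 ≤ t+1)]
        have hAd : ((t:ℕ):ℝ) * x (t+1) + x (t+1) = ((t+1:ℕ):ℝ) * x (t+1) := by
          push_cast
          ring
        rw [hBd, hAd] at this
        rw [Real.mul_rpow (by positivity) hxnn, Real.mul_rpow (by positivity) hxnn] at this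
        rw [hGx, hu]
        dsimp only
        convert this using 2
      have hDRu : w (t+1) * u (t+1)
          = (((t+1:ℕ):ℝ)^p * u (t+1) - ((t:ℕ):ℝ)^p * u (t+1)) * R (t+1) := by
        rw [hw]
        dsimp only
        rw [show (t+1)-1 = t by omega]
        ring
      rw [hDRu, show (t+1)-1 = t by omega]
      exact mul_le_mul_of_nonneg_right hdiff (hRnn (t+1))
    have step_core : ∑ m ∈ Icc 1 M, (Gx m - Gx (m-1)) * R m ≤ ∑' n, L n := by
      rw [show ∑ m ∈ Icc 1 M, (Gx m - Gx (m-1)) * R m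
          = ∑ m ∈ Icc 1 M, (Gx m - Gx (m-1)) * (∑' i : ℕ, ((m+i:ℕ):ℝ)^(-(p-a))) from rfl,
        core_swap hb Gx hGx0 hGxmono M]
      apply Summable.tsum_le_tsum _ _ hLsum
      · intro j
        rw [hL]
        dsimp only
        apply mul_le_mul_of_nonneg_left _ (r_nonneg' _ _)
        exact hGxmono (min_le_left (j+1) M)
      · apply Summable.of_nonneg_of_le _ _ hLsum
        · intro j
          exact mul_nonneg (r_nonneg' _ _) (by rw [← hGx0]; exact hGxmono (Nat.zero_le _))
        · intro j
          apply mul_le_mul_of_nonneg_left _ (r_nonneg' _ _)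
          exact hGxmono (min_le_left (j+1) M)
    calc zeta * ∑ m ∈ Icc 1 M, (m:ℝ)^a * u m
        = ∑ m ∈ Icc 1 M, (zeta * (m:ℝ)^a) * u m := by
          rw [Finset.mul_sum]
          apply Finset.sum_congr rfl
          intro m _
          ring
      _ ≤ ∑ m ∈ Icc 1 M, w m * u m := step_layer
      _ ≤ ∑ m ∈ Icc 1 M, (Gx m - Gx (m-1)) * R m := step_perm
      _ ≤ ∑' n, L n := step_core
  -- limits
  have hsum' : Summable (fun n : ℕ => ((n+1:ℕ):ℝ)^a * (x (n+1))^p) := by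
    apply hsum.congr
    intro n
    ring
  have hreind : ∀ M : ℕ, ∑ n ∈ Finset.range M, ((n+1:ℕ):ℝ)^a * (x (n+1))^p
      = ∑ m ∈ Icc 1 M, (m:ℝ)^a * u m := by
    intro M
    have hmap2 : Finset.Icc 1 M = (Finset.range M).map ⟨fun n => n+1, fun c d h => by simpa using h⟩ := by
      ext j
      simp only [Finset.mem_map, Finset.mem_range, Finset.mem_Icc, Function.Embedding.coeFn_mk]
      constructor
      · rintro ⟨h1, h2⟩
        exact ⟨j-1, by omega, by show j-1+1 = j; omega⟩
      · rintro ⟨c, h1, rfl⟩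
        show 1 ≤ c+1 ∧ c+1 ≤ M; omega
    rw [hmap2, Finset.sum_map]
    rfl
  rw [ge_iff_le, hLHS, hzeta_eq]
  have htends : Tendsto (fun M => zeta * ∑ n ∈ Finset.range M, ((n+1:ℕ):ℝ)^a * (x (n+1))^p)
      atTop (nhds (zeta * ∑' n : ℕ, ((n+1:ℕ):ℝ)^a * (x (n+1))^p)) :=
    (hsum'.hasSum.tendsto_sum_nat).const_mul zeta
  have hfinal : zeta * ∑' n : ℕ, ((n+1:ℕ):ℝ)^a * (x (n+1))^p ≤ ∑' n, L n := by
    apply le_of_tendsto htends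
    apply Filter.Eventually.of_forall
    intro M
    rw [hreind M]
    exact hpartial M
  exact hfinal
end

section
/- Let p > 1 and 0 ≤ a < p-1. The constant ζ(p-a) in the inequality ∑_{n=1}^∞ n^a·((x_1+…+x_n)/n)^p ≥ ζ(p-a)·∑_{n=1}^∞ n^a·x_n^p (valid for all nonnegative nonincreasing sequences x) is optimal: equality is attained for the sequence x with x_1 = 1 and x_n = 0 for n ≥ 2. -/
/-- Equality in the reversed Hardy inequality is attained for `x = (1,0,0,…)`,
showing the constant `ζ(p-a)` is optimal. -/
theorem stmt4 (p a : ℝ) (hp : 1 < p) (ha0 : 0 ≤ a) (ha : a < p - 1) :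
    (∑' n : ℕ, ((n + 1 : ℕ) : ℝ) ^ a *
        ((∑ k ∈ Finset.Icc 1 (n + 1), (if k = 1 then (1 : ℝ) else 0)) / ((n + 1 : ℕ) : ℝ)) ^ p)
      = (∑' k : ℕ, ((k + 1 : ℕ) : ℝ) ^ (-(p - a))) *
          ∑' n : ℕ, ((n + 1 : ℕ) : ℝ) ^ a * (if n + 1 = 1 then (1 : ℝ) else 0) ^ p := by
  have hp0 : p ≠ 0 := by linarith
  have h2 : (∑' n : ℕ, ((n + 1 : ℕ) : ℝ) ^ a * (if n + 1 = 1 then (1 : ℝ) else 0) ^ p) = 1 := by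
    rw [tsum_eq_single 0]
    · simp
    · intro n hn
      simp [Nat.succ_ne_zero, hn, Real.zero_rpow hp0]
  rw [h2, mul_one]
  apply tsum_congr
  intro n
  have h1 : (∑ k ∈ Finset.Icc 1 (n + 1), (if k = 1 then (1 : ℝ) else 0)) = 1 := by
    rw [Finset.sum_ite_eq']
    simp
  rw [h1]
  have hn : (0 : ℝ) < ((n + 1 : ℕ) : ℝ) := by positivity
  rw [one_div, ← Real.rpow_neg_one ((n + 1 : ℕ) : ℝ), ← Real.rpow_mul hn.le,
    ← Real.rpow_add hn]
  ring_nf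
end

section
/- Let 1 < p ≤ s < ∞. The constant B_{p,s} = (p')^{-1/s}·(s'/p')^{1/s'}·(s/p)^{1/s} in the inequality ‖x‖'_{p,s} ≤ B_{p,s}·‖x‖*_{p,s} is optimal; in particular, taking u^K the 0-1 indicator sequence of {1,…,K}, the ratio ‖u^K‖'_{p,s}/‖u^K‖*_{p,s} converges to B_{p,s} as K → ∞. -/
open Filter Real Set

lemma integral_rpow_pos {e : ℝ} (he : -1 < e) {K : ℕ} (hK : 1 ≤ K) :
    ∫ x in (1:ℝ)..(K:ℝ), x ^ e = ((K:ℝ) ^ (e+1) - 1) / (e+1) := by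
  rw [integral_rpow (Or.inl he)]
  rw [Real.one_rpow]

lemma sumA_lower {e : ℝ} (he : -1 < e) {K : ℕ} (hK : 1 ≤ K) :
    ((K:ℝ) ^ (e+1) - 1) / (e+1) ≤ ∑ n ∈ Finset.Icc 1 K, (n:ℝ) ^ e := by
  rcases le_or_gt 0 e with h0 | h0
  · -- monotone case: integral over [0,K] ≤ sum
    have hmono : MonotoneOn (fun x : ℝ => x ^ e) (Icc (0:ℝ) (0 + K)) := by
      intro x hx y hy hxy
      exact Real.rpow_le_rpow hx.1 hxy h0
    have h1 := hmono.integral_le_sum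
    have h2 : ∫ x in (0:ℝ)..(0 + K : ℝ), x ^ e = (K:ℝ) ^ (e+1) / (e+1) := by
      rw [integral_rpow (Or.inl he), Real.zero_rpow (by linarith), zero_add, sub_zero]
    have h3 : ∑ i ∈ Finset.range K, ((0:ℝ) + (i + 1 : ℕ)) ^ e
        = ∑ n ∈ Finset.Icc 1 K, (n:ℝ) ^ e := by
      rw [← Finset.Ico_add_one_right_eq_Icc, Finset.sum_Ico_eq_sum_range]
      apply Finset.sum_congr rfl
      intro i _
      push_cast
      ring_nf
    rw [h2, h3] at h1
    have hKpos : (0:ℝ) < (K:ℝ)^(e+1) := by positivity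
    calc ((K:ℝ) ^ (e+1) - 1) / (e+1) ≤ (K:ℝ)^(e+1)/(e+1) := by
          apply div_le_div_of_nonneg_right ?_ (by linarith)
          · linarith
      _ ≤ _ := h1
  · -- antitone case
    obtain ⟨M, rfl⟩ : ∃ M, K = M + 1 := ⟨K - 1, (Nat.succ_pred_eq_of_pos hK).symm⟩
    have hanti : AntitoneOn (fun x : ℝ => x ^ e) (Icc (1:ℝ) (1 + M)) := by
      intro x hx y hy hxy
      exact Real.rpow_le_rpow_of_nonpos (lt_of_lt_of_le one_pos hx.1) hxy h0.le
    have h1 := hanti.integral_le_sum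
    have h2 : ∫ x in (1:ℝ)..(1 + M : ℝ), x ^ e = ((1+M:ℝ) ^ (e+1) - 1) / (e+1) := by
      rw [integral_rpow (Or.inl he), Real.one_rpow]
    have h3 : ∑ i ∈ Finset.range M, ((1:ℝ) + (i : ℕ)) ^ e
        ≤ ∑ n ∈ Finset.Icc 1 (M+1), (n:ℝ) ^ e := by
      calc ∑ i ∈ Finset.range M, ((1:ℝ) + (i:ℕ)) ^ e
          = ∑ i ∈ Finset.range M, ((1+i:ℕ):ℝ) ^ e := by
            apply Finset.sum_congr rfl; intro i _; push_cast; ring_nf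
        _ ≤ ∑ i ∈ Finset.range (M+1), ((1+i:ℕ):ℝ) ^ e := by
            apply Finset.sum_le_sum_of_subset_of_nonneg (by simp)
            intro i _ _; positivity
        _ = ∑ n ∈ Finset.Icc 1 (M+1), (n:ℝ)^e := by
            rw [← Finset.Ico_add_one_right_eq_Icc, Finset.sum_Ico_eq_sum_range]; rfl
    rw [h2] at h1
    have : ((M+1:ℕ):ℝ) = (1:ℝ)+M := by push_cast; ring
    rw [this]
    exact le_trans h1 h3

lemma sumA_upper {e : ℝ} (he : -1 < e) {K : ℕ} (hK : 1 ≤ K) :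
    ∑ n ∈ Finset.Icc 1 K, (n:ℝ) ^ e ≤ 1 + (K:ℝ) ^ (e+1) / (e+1) + (K:ℝ) ^ e := by
  rcases le_or_gt 0 e with h0 | h0
  · -- monotone case
    have hmono : MonotoneOn (fun x : ℝ => x ^ e) (Icc (0:ℝ) (0 + K)) := by
      intro x hx y hy hxy
      exact Real.rpow_le_rpow hx.1 hxy h0
    have h1 := hmono.sum_le_integral
    have h2 : ∫ x in (0:ℝ)..(0 + K : ℝ), x ^ e = (K:ℝ) ^ (e+1) / (e+1) := by
      rw [integral_rpow (Or.inl he), Real.zero_rpow (by linarith), zero_add, sub_zero]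
    rw [h2] at h1
    have h3 : ∑ n ∈ Finset.Icc 1 K, (n:ℝ) ^ e
        ≤ ∑ i ∈ Finset.range K, ((0:ℝ) + (i:ℕ)) ^ e + (K:ℝ) ^ e := by
      rw [← Finset.Ico_add_one_right_eq_Icc, Finset.sum_Ico_eq_sum_range]
      have key := Finset.sum_range_succ' (fun i : ℕ => ((i:ℕ):ℝ) ^ e) K
      have key2 := Finset.sum_range_succ (fun i : ℕ => ((i:ℕ):ℝ) ^ e) K
      have e1 : ∑ k ∈ Finset.range (K + 1 - 1), ((1 + k : ℕ):ℝ) ^ e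
          = ∑ i ∈ Finset.range K, ((i+1:ℕ):ℝ) ^ e := by
        apply Finset.sum_congr rfl; intro i _; push_cast; ring_nf
      have e2 : ∑ i ∈ Finset.range K, ((0:ℝ) + (i:ℕ)) ^ e
          = ∑ i ∈ Finset.range K, ((i:ℕ):ℝ) ^ e := by
        apply Finset.sum_congr rfl; intro i _; rw [zero_add]
      have e3 : (0:ℝ) ≤ ((0:ℕ):ℝ) ^ e := by positivity
      linarith
    linarith
  · -- antitone case
    obtain ⟨M, rfl⟩ : ∃ M, K = M + 1 := ⟨K - 1, (Nat.succ_pred_eq_of_pos hK).symm⟩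
    have hanti : AntitoneOn (fun x : ℝ => x ^ e) (Icc (1:ℝ) (1 + M)) := by
      intro x hx y hy hxy
      exact Real.rpow_le_rpow_of_nonpos (lt_of_lt_of_le one_pos hx.1) hxy h0.le
    have h1 := hanti.sum_le_integral
    have h2 : ∫ x in (1:ℝ)..(1 + M : ℝ), x ^ e = ((1+(M:ℝ)) ^ (e+1) - 1) / (e+1) := by
      rw [integral_rpow (Or.inl he), Real.one_rpow]
    rw [h2] at h1
    have h3 : ∑ n ∈ Finset.Icc 1 (M+1), (n:ℝ) ^ e
        = 1 + ∑ i ∈ Finset.range M, ((1:ℝ) + ((i+1:ℕ):ℝ)) ^ e := by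
      rw [← Finset.Ico_add_one_right_eq_Icc, Finset.sum_Ico_eq_sum_range]
      have : M + 1 + 1 - 1 = M + 1 := rfl
      rw [this, Finset.sum_range_succ']
      have t1 : ∑ i ∈ Finset.range M, ((1+(i+1):ℕ):ℝ) ^ e
          = ∑ i ∈ Finset.range M, ((1:ℝ)+((i+1:ℕ):ℝ)) ^ e := by
        apply Finset.sum_congr rfl; intro i _; push_cast; ring_nf
      have t2 : ((1+0:ℕ):ℝ) ^ e = 1 := by norm_num
      rw [t1, t2]; ring
    have hcast : ((M+1:ℕ):ℝ) = 1 + (M:ℝ) := by push_cast; ring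
    have hbound : (1+(M:ℝ)) ^ (e+1) ≤ ((M+1:ℕ):ℝ) ^ (e+1) := by rw [hcast]
    have hKe : (0:ℝ) ≤ (1+(M:ℝ)) ^ e := by positivity
    have h1' : ∑ i ∈ Finset.range M, ((1:ℝ) + ((i+1:ℕ):ℝ)) ^ e
        ≤ ((1+(M:ℝ)) ^ (e+1) - 1) / (e+1) := by
      refine le_trans (le_of_eq ?_) h1
      apply Finset.sum_congr rfl; intro i _; push_cast; ring_nf
    have hd : ((1+(M:ℝ)) ^ (e+1) - 1) / (e+1) ≤ (1+(M:ℝ)) ^ (e+1) / (e+1) := by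
      gcongr
      · linarith
      · linarith
    rw [h3, hcast]
    linarith [h1', hd, hKe]

lemma tendsto_sum_Icc_rpow {e : ℝ} (he : -1 < e) :
    Tendsto (fun K : ℕ => (∑ n ∈ Finset.Icc 1 K, (n:ℝ) ^ e) / (K:ℝ) ^ (e+1))
      atTop (nhds (1/(e+1))) := by
  have he1 : (0:ℝ) < e + 1 := by linarith
  have hT : Tendsto (fun K : ℕ => ((K:ℝ)) ^ (e+1)) atTop atTop :=
    (tendsto_rpow_atTop he1).comp tendsto_natCast_atTop_atTop
  have hTinv : Tendsto (fun K : ℕ => (((K:ℝ)) ^ (e+1))⁻¹) atTop (nhds 0) :=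
    hT.inv_tendsto_atTop
  have hNinv : Tendsto (fun K : ℕ => ((K:ℝ))⁻¹) atTop (nhds 0) :=
    tendsto_inv_atTop_zero.comp tendsto_natCast_atTop_atTop
  have hlow : Tendsto (fun K : ℕ => 1/(e+1) - (((K:ℝ)) ^ (e+1))⁻¹ / (e+1))
      atTop (nhds (1/(e+1))) := by
    have := tendsto_const_nhds (x := 1/(e+1)) (f := atTop (α := ℕ))
    have h2 := this.sub (hTinv.div_const (e+1))
    simpa using h2
  have hup : Tendsto (fun K : ℕ => (((K:ℝ)) ^ (e+1))⁻¹ + 1/(e+1) + ((K:ℝ))⁻¹)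
      atTop (nhds (1/(e+1))) := by
    have h2 := (hTinv.add (tendsto_const_nhds (x := 1/(e+1)))).add hNinv
    simpa using h2
  apply tendsto_of_tendsto_of_tendsto_of_le_of_le' hlow hup
  · filter_upwards [eventually_ge_atTop 1] with K hK
    have hKpos : (0:ℝ) < (K:ℝ) := by exact_mod_cast hK
    have hx : (0:ℝ) < (K:ℝ) ^ (e+1) := by positivity
    rw [le_div_iff₀ hx]
    have := sumA_lower he hK
    have expand : (1/(e+1) - ((K:ℝ) ^ (e+1))⁻¹ / (e+1)) * (K:ℝ) ^ (e+1)
        = ((K:ℝ) ^ (e+1) - 1) / (e+1) := by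
      field_simp
    rw [expand]
    exact this
  · filter_upwards [eventually_ge_atTop 1] with K hK
    have hKpos : (0:ℝ) < (K:ℝ) := by exact_mod_cast hK
    have hx : (0:ℝ) < (K:ℝ) ^ (e+1) := by positivity
    rw [div_le_iff₀ hx]
    have := sumA_upper he hK
    have hKe : (K:ℝ) ^ e = ((K:ℝ))⁻¹ * (K:ℝ) ^ (e+1) := by
      rw [← Real.rpow_neg_one (K:ℝ), ← Real.rpow_add hKpos]
      ring_nf
    have expand : (((K:ℝ) ^ (e+1))⁻¹ + 1/(e+1) + ((K:ℝ))⁻¹) * (K:ℝ) ^ (e+1)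
        = 1 + (K:ℝ) ^ (e+1) / (e+1) + ((K:ℝ))⁻¹ * (K:ℝ) ^ (e+1) := by
      field_simp
    rw [expand, ← hKe]
    exact this

lemma tail_summable {c : ℝ} (hc : 1 < c) (K : ℕ) :
    Summable (fun j : ℕ => ((j + K + 1 : ℕ):ℝ) ^ (-c)) := by
  have h0 : Summable (fun n : ℕ => ((n:ℕ):ℝ) ^ (-c)) :=
    Real.summable_nat_rpow.mpr (by linarith)
  have hinj : Function.Injective (fun j : ℕ => j + K + 1) := by
    intro a b h; simpa using h
  exact h0.comp_injective hinj

lemma rpow_div_sub_div_le {c A B : ℝ} (hc : 1 < c) (hB : 0 ≤ B) :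
    (B - A) / (-c + 1) ≤ A / (c - 1) := by
  have h1 : (-c + 1) ≠ 0 := by intro h; linarith
  have h2 : (0:ℝ) < c - 1 := by linarith
  have heq : (B - A) / (-c + 1) = (A - B) / (c - 1) := by
    rw [div_eq_div_iff h1 (ne_of_gt h2)]
    ring
  rw [heq]
  exact div_le_div_of_nonneg_right (by linarith) h2.le

lemma tail_upper {c : ℝ} (hc : 1 < c) {K : ℕ} (hK : 1 ≤ K) :
    ∑' j : ℕ, ((j + K + 1 : ℕ):ℝ) ^ (-c) ≤ (K:ℝ) ^ (1-c) / (c-1) := by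
  have hKpos : (0:ℝ) < (K:ℝ) := by exact_mod_cast hK
  apply Real.tsum_le_of_sum_range_le (fun j => by positivity)
  intro M
  have hanti : AntitoneOn (fun x : ℝ => x ^ (-c)) (Icc ((K:ℝ)) ((K:ℝ) + M)) := by
    intro x hx y hy hxy
    exact Real.rpow_le_rpow_of_nonpos (lt_of_lt_of_le hKpos hx.1) hxy (by linarith)
  have h1 := hanti.sum_le_integral
  have h2 : ∫ x in ((K:ℝ))..((K:ℝ) + M), x ^ (-c)
      = (((K:ℝ) + M) ^ (-c+1) - (K:ℝ) ^ (-c+1)) / (-c+1) := by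
    rw [integral_rpow]
    right
    refine ⟨by intro h; linarith, ?_⟩
    intro h
    rcases Set.mem_uIcc.mp h with h' | h'
    · linarith [h'.1]
    · linarith [h'.1, h'.2, (Nat.cast_nonneg M : (0:ℝ) ≤ M)]
  have h3 : ∑ i ∈ Finset.range M, ((i + K + 1 : ℕ):ℝ) ^ (-c)
      = ∑ i ∈ Finset.range M, ((K:ℝ) + ((i+1 : ℕ):ℝ)) ^ (-c) := by
    apply Finset.sum_congr rfl; intro i _; push_cast; ring_nf
  rw [h3]
  refine le_trans h1 ?_
  rw [h2]
  have hb : (0:ℝ) ≤ ((K:ℝ) + M) ^ (-c+1) := by positivity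
  have hrw : (K:ℝ) ^ (1-c) = (K:ℝ) ^ (-c+1) := by congr 1; ring
  rw [hrw]
  exact rpow_div_sub_div_le hc hb

lemma tail_lower {c : ℝ} (hc : 1 < c) (K : ℕ) :
    ((K:ℝ) + 1) ^ (1-c) / (c-1) ≤ ∑' j : ℕ, ((j + K + 1 : ℕ):ℝ) ^ (-c) := by
  rw [show (1:ℝ)-c = -c+1 from by ring]
  have hsum := tail_summable hc K
  have hK1 : (0:ℝ) < (K:ℝ) + 1 := by positivity
  have key : ∀ M : ℕ, (((K:ℝ)+1) ^ (-c+1) - ((K:ℝ)+1+M) ^ (-c+1)) / (c-1)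
      ≤ ∑' j : ℕ, ((j + K + 1 : ℕ):ℝ) ^ (-c) := by
    intro M
    have hanti : AntitoneOn (fun x : ℝ => x ^ (-c)) (Icc ((K:ℝ)+1) (((K:ℝ)+1) + M)) := by
      intro x hx y hy hxy
      exact Real.rpow_le_rpow_of_nonpos (lt_of_lt_of_le hK1 hx.1) hxy (by linarith)
    have h1 := hanti.integral_le_sum
    have h2 : ∫ x in ((K:ℝ)+1)..(((K:ℝ)+1) + M), x ^ (-c)
        = (((K:ℝ)+1+M) ^ (-c+1) - ((K:ℝ)+1) ^ (-c+1)) / (-c+1) := by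
      rw [integral_rpow]
      right
      refine ⟨by intro h; linarith, ?_⟩
      intro h
      rcases Set.mem_uIcc.mp h with h' | h'
      · linarith [h'.1]
      · linarith [h'.1, h'.2, (Nat.cast_nonneg M : (0:ℝ) ≤ M)]
    have h3 : ∑ i ∈ Finset.range M, (((K:ℝ)+1) + ((i:ℕ):ℝ)) ^ (-c)
        ≤ ∑' j : ℕ, ((j + K + 1 : ℕ):ℝ) ^ (-c) := by
      have h4 : ∑ i ∈ Finset.range M, (((K:ℝ)+1) + ((i:ℕ):ℝ)) ^ (-c)
          = ∑ i ∈ Finset.range M, ((i + K + 1 : ℕ):ℝ) ^ (-c) := by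
        apply Finset.sum_congr rfl; intro i _; push_cast; ring_nf
      rw [h4]
      exact Summable.sum_le_tsum _ (fun j _ => by positivity) hsum
    have heq : (((K:ℝ)+1+M) ^ (-c+1) - ((K:ℝ)+1) ^ (-c+1)) / (-c+1)
        = (((K:ℝ)+1) ^ (-c+1) - ((K:ℝ)+1+M) ^ (-c+1)) / (c-1) := by
      rw [div_eq_div_iff (by intro h; linarith : (-c+1) ≠ 0) (by intro h; linarith : (c-1) ≠ 0)]
      ring
    rw [h2, heq] at h1
    exact le_trans h1 h3
  have hlim : Tendsto (fun M : ℕ => (((K:ℝ)+1) ^ (-c+1) - ((K:ℝ)+1+M) ^ (-c+1)) / (c-1))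
      atTop (nhds (((K:ℝ) + 1) ^ (-c+1) / (c-1))) := by
    have hbase : Tendsto (fun M : ℕ => (K:ℝ)+1+M) atTop atTop :=
      tendsto_atTop_add_const_left atTop _ tendsto_natCast_atTop_atTop
    have hz : Tendsto (fun M : ℕ => ((K:ℝ)+1+M) ^ (-c+1)) atTop (nhds 0) := by
      have h0 : Tendsto (fun x : ℝ => x ^ (-(c-1))) atTop (nhds 0) :=
        tendsto_rpow_neg_atTop (by linarith)
      have h5 := h0.comp hbase
      apply h5.congr
      intro M
      simp only [Function.comp]
      congr 1
      ring
    have h6 := ((tendsto_const_nhds (x := ((K:ℝ)+1) ^ (-c+1))).sub hz).div_const (c-1)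
    simpa using h6
  exact le_of_tendsto hlim (Eventually.of_forall key)

lemma tendsto_tail_tsum {c : ℝ} (hc : 1 < c) :
    Tendsto (fun K : ℕ => (K:ℝ) ^ (c-1) * ∑' j : ℕ, ((j + K + 1 : ℕ):ℝ) ^ (-c))
      atTop (nhds (1/(c-1))) := by
  have hc1 : (0:ℝ) < c - 1 := by linarith
  -- lower bound function
  have hlow : Tendsto (fun K : ℕ => ((K:ℝ)/((K:ℝ)+1)) ^ (c-1) / (c-1))
      atTop (nhds (1/(c-1))) := by
    have hdiv : Tendsto (fun K : ℕ => (K:ℝ)/((K:ℝ)+1)) atTop (nhds 1) := by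
      have := tendsto_natCast_div_add_atTop (𝕜 := ℝ) 1
      exact this
    have hr := hdiv.rpow_const (p := c-1) (Or.inl one_ne_zero)
    rw [Real.one_rpow] at hr
    exact hr.div_const (c-1)
  apply tendsto_of_tendsto_of_tendsto_of_le_of_le' hlow tendsto_const_nhds
  · filter_upwards [eventually_ge_atTop 1] with K hK
    have hKpos : (0:ℝ) < (K:ℝ) := by exact_mod_cast hK
    have h1 := tail_lower hc K
    have heq : ((K:ℝ)/((K:ℝ)+1)) ^ (c-1) / (c-1)
        = (K:ℝ) ^ (c-1) * (((K:ℝ)+1) ^ (1-c) / (c-1)) := by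
      rw [Real.div_rpow hKpos.le (by positivity)]
      rw [show (1:ℝ)-c = -(c-1) from by ring, Real.rpow_neg (by positivity)]
      field_simp
    rw [heq]
    have hm : (0:ℝ) ≤ (K:ℝ) ^ (c-1) := by positivity
    exact mul_le_mul_of_nonneg_left h1 hm
  · filter_upwards [eventually_ge_atTop 1] with K hK
    have hKpos : (0:ℝ) < (K:ℝ) := by exact_mod_cast hK
    have h1 := tail_upper hc hK
    have heq : (K:ℝ) ^ (c-1) * ((K:ℝ) ^ (1-c) / (c-1)) = 1/(c-1) := by
      rw [div_eq_mul_one_div, ← mul_assoc, ← Real.rpow_add hKpos]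
      norm_num
    calc (K:ℝ) ^ (c-1) * ∑' j : ℕ, ((j + K + 1 : ℕ):ℝ) ^ (-c)
        ≤ (K:ℝ) ^ (c-1) * ((K:ℝ) ^ (1-c) / (c-1)) :=
          mul_le_mul_of_nonneg_left h1 (by positivity)
      _ = 1/(c-1) := heq

theorem stmt13 (p s p' s' : ℝ) (hp : 1 < p) (hps : p ≤ s)
    (hp' : 1 / p + 1 / p' = 1) (hs' : 1 / s + 1 / s' = 1) :
    Tendsto
      (fun K : ℕ =>
        ((K : ℝ) ^ s * (∑ n ∈ Finset.Icc 1 K, (n : ℝ) ^ (-(1 - s' / p'))) ^ (-(s / s'))) ^ (1 / s) /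
          (∑ n ∈ Finset.Icc 1 K, (n : ℝ) ^ (s / p - 1) +
              (K : ℝ) ^ s * ∑' j : ℕ, ((j + K + 1 : ℕ) : ℝ) ^ (-(s / p') - 1)) ^ (1 / s))
      atTop (nhds (p' ^ (-(1 / s)) * (s' / p') ^ (1 / s') * (s / p) ^ (1 / s))) := by
  have hp0 : (0:ℝ) < p := by linarith
  have hs1 : (1:ℝ) < s := lt_of_lt_of_le hp hps
  have hs0 : (0:ℝ) < s := by linarith
  have hinvp : 1/p < 1 := by rw [div_lt_one hp0]; exact hp
  have hinvs : 1/s < 1 := by rw [div_lt_one hs0]; exact hs1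
  have hp'0 : (0:ℝ) < p' := one_div_pos.mp (by linarith)
  have hs'0 : (0:ℝ) < s' := one_div_pos.mp (by linarith)
  have hpne : p ≠ 0 := hp0.ne'
  have hsne : s ≠ 0 := hs0.ne'
  have hp'ne : p' ≠ 0 := hp'0.ne'
  have hs'ne : s' ≠ 0 := hs'0.ne'
  -- key exponent identities
  have hexp1 : -(1 - s'/p') + 1 = s'/p' := by ring
  have hexp2 : s/p - 1 + 1 = s/p := by ring
  have hsum_exp : s/p + s/p' = s := by
    have : s/p + s/p' = s * (1/p + 1/p') := by ring
    rw [this, hp', mul_one]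
  -- limits of the three ratios
  have t1 : Tendsto (fun K : ℕ =>
      (∑ n ∈ Finset.Icc 1 K, (n:ℝ) ^ (-(1 - s'/p'))) / (K:ℝ) ^ (s'/p'))
      atTop (nhds (p'/s')) := by
    have h := tendsto_sum_Icc_rpow (e := -(1 - s'/p')) (by nlinarith [div_pos hs'0 hp'0])
    rw [hexp1, one_div_div] at h
    exact h
  have t2 : Tendsto (fun K : ℕ =>
      (∑ n ∈ Finset.Icc 1 K, (n:ℝ) ^ (s/p - 1)) / (K:ℝ) ^ (s/p))
      atTop (nhds (p/s)) := by
    have h := tendsto_sum_Icc_rpow (e := s/p - 1) (by nlinarith [div_pos hs0 hp0])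
    rw [hexp2, one_div_div] at h
    exact h
  have t3 : Tendsto (fun K : ℕ =>
      (K:ℝ) ^ (s/p') * ∑' j : ℕ, ((j + K + 1 : ℕ):ℝ) ^ (-(s/p') - 1))
      atTop (nhds (p'/s)) := by
    have h := tendsto_tail_tsum (c := s/p' + 1) (by nlinarith [div_pos hs0 hp'0])
    rw [show s/p' + 1 - 1 = s/p' from by ring, show -(s/p' + 1) = -(s/p') - 1 from by ring,
      one_div_div] at h
    exact h
  -- the limit of the combined expression
  have hden_pos : (0:ℝ) < p/s + p'/s := by positivity
  have hG : Tendsto (fun K : ℕ =>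
      ((∑ n ∈ Finset.Icc 1 K, (n:ℝ) ^ (-(1 - s'/p'))) / (K:ℝ) ^ (s'/p')) ^ (-(1/s')) /
        ((∑ n ∈ Finset.Icc 1 K, (n:ℝ) ^ (s/p - 1)) / (K:ℝ) ^ (s/p) +
          (K:ℝ) ^ (s/p') * ∑' j : ℕ, ((j + K + 1 : ℕ):ℝ) ^ (-(s/p') - 1)) ^ (1/s))
      atTop (nhds ((p'/s') ^ (-(1/s')) / (p/s + p'/s) ^ (1/s))) := by
    have hnum := t1.rpow_const (p := -(1/s')) (Or.inl (by positivity))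
    have hden := (t2.add t3).rpow_const (p := 1/s) (Or.inl hden_pos.ne')
    exact hnum.div hden (by positivity)
  -- identify the limit value
  have hval : (p'/s') ^ (-(1/s')) / (p/s + p'/s) ^ (1/s)
      = p' ^ (-(1/s)) * (s'/p') ^ (1/s') * (s/p) ^ (1/s) := by
    have hpp' : p + p' = p * p' := by field_simp at hp' ⊢; linarith
    have e1 : (p'/s') ^ (-(1/s')) = (s'/p') ^ (1/s') := by
      rw [Real.rpow_neg (by positivity), ← Real.inv_rpow (by positivity), inv_div]
    have e2 : p' ^ (-(1/s)) = (p' ^ (1/s))⁻¹ := Real.rpow_neg hp'0.le _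
    have e3 : (s/p) ^ (1/s) = ((p/s) ^ (1/s))⁻¹ := by
      rw [← Real.inv_rpow (by positivity), inv_div]
    have e4 : p/s + p'/s = p' * (p/s) := by
      field_simp
      linarith [hpp']
    rw [e1, e2, e3, e4, Real.mul_rpow hp'0.le (by positivity)]
    rw [div_eq_mul_inv, mul_inv]
    ring
  rw [← hval]
  -- eventual equality between the target function and the combined expression
  apply Tendsto.congr' ?_ hG
  filter_upwards [eventually_ge_atTop 1] with K hK
  set N : ℝ := (K:ℝ) with hN
  have hN1 : (1:ℝ) ≤ N := by rw [hN]; exact_mod_cast hK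
  have hN0 : (0:ℝ) < N := by linarith
  set A := ∑ n ∈ Finset.Icc 1 K, (n:ℝ) ^ (-(1 - s'/p')) with hAdef
  set B := ∑ n ∈ Finset.Icc 1 K, (n:ℝ) ^ (s/p - 1) with hBdef
  set T := ∑' j : ℕ, ((j + K + 1 : ℕ):ℝ) ^ (-(s/p') - 1) with hTdef
  have hA : 0 < A := by
    apply Finset.sum_pos ?_ (Finset.nonempty_Icc.mpr hK)
    intro i hi
    have : 0 < (i:ℝ) := by
      have := (Finset.mem_Icc.mp hi).1
      exact_mod_cast lt_of_lt_of_le zero_lt_one (by exact_mod_cast this)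
    exact Real.rpow_pos_of_pos this _
  have hB : 0 < B := by
    apply Finset.sum_pos ?_ (Finset.nonempty_Icc.mpr hK)
    intro i hi
    have : 0 < (i:ℝ) := by
      have := (Finset.mem_Icc.mp hi).1
      exact_mod_cast lt_of_lt_of_le zero_lt_one (by exact_mod_cast this)
    exact Real.rpow_pos_of_pos this _
  have hT : 0 ≤ T := tsum_nonneg (fun j => by positivity)
  have hNs : (0:ℝ) < N ^ s := Real.rpow_pos_of_pos hN0 _
  -- numerator identity
  have hnum : (N ^ s * A ^ (-(s/s'))) ^ (1/s) = A ^ (-(1/s')) * N := by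
    rw [Real.mul_rpow hNs.le (by positivity), ← Real.rpow_mul hN0.le, ← Real.rpow_mul hA.le]
    rw [mul_one_div_cancel hsne, Real.rpow_one]
    rw [show -(s/s') * (1/s) = -(1/s') from by field_simp]
    ring
  -- G numerator identity
  have hGnum : (A / N ^ (s'/p')) ^ (-(1/s')) = A ^ (-(1/s')) * N ^ (1/p') := by
    rw [Real.div_rpow hA.le (by positivity), ← Real.rpow_mul hN0.le]
    rw [show s'/p' * -(1/s') = -(1/p') from by field_simp]
    rw [Real.rpow_neg hN0.le, div_eq_mul_inv, inv_inv]
  -- G denominator identity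
  have hNsplit : N ^ s = N ^ (s/p) * N ^ (s/p') := by
    rw [← Real.rpow_add hN0, hsum_exp]
  have hGden : (B / N ^ (s/p) + N ^ (s/p') * T) ^ (1/s)
      = (B + N ^ s * T) ^ (1/s) / N ^ (1/p) := by
    have hNsp : (0:ℝ) < N ^ (s/p) := Real.rpow_pos_of_pos hN0 _
    have harg : B / N ^ (s/p) + N ^ (s/p') * T = (B + N ^ s * T) / N ^ (s/p) := by
      rw [hNsplit]
      field_simp
    rw [harg, Real.div_rpow (by positivity) hNsp.le, ← Real.rpow_mul hN0.le]
    rw [show s/p * (1/s) = 1/p from by field_simp]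
  have hNN : N ^ (1/p') * N ^ (1/p) = N := by
    rw [← Real.rpow_add hN0, show 1/p' + 1/p = 1 from by linarith, Real.rpow_one]
  -- final computation
  rw [hGnum, hGden, hnum]
  rw [div_div_eq_mul_div]
  rw [show A ^ (-(1/s')) * N ^ (1/p') * N ^ (1/p) = A ^ (-(1/s')) * N from by rw [mul_assoc, hNN]]
end
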